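/- arXiv:2201.10689 — 6 statements merged into one kernel-verified Lean document; each statement's English description precedes it below -/
import Mathlib

section
/- Let F : ℝⁿ ⇉ ℝᵐ be a set-valued mapping with convex graph. Then (x, y) belongs to the relative interior of the graph of F if and only if x belongs to the relative interior of the domain of F and y belongs to the relative interior of F(x). -/
open Set

variable {E : Type*} [NormedAddCommGroup E] [NormedSpace ℝ E]

lemma mem_ri_iff' {s : Set E} {z : E} :
    z ∈ intrinsicInterior ℝ s ↔
      z ∈ s ∧ ∃ ε > 0, ∀ p ∈ (affineSpan ℝ s : Set E), dist p z < ε → p ∈ s := by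
  constructor
  · intro h
    obtain ⟨z', hz', hz'e⟩ := mem_intrinsicInterior.1 h
    subst hz'e
    refine ⟨(interior_subset hz' : z' ∈ Subtype.val ⁻¹' s), ?_⟩
    rw [mem_interior_iff_mem_nhds, Metric.mem_nhds_iff] at hz'
    obtain ⟨ε, εpos, hball⟩ := hz'
    refine ⟨ε, εpos, fun p hp hd => ?_⟩
    have : (⟨p, hp⟩ : affineSpan ℝ s) ∈ Metric.ball z' ε := by
      rw [Metric.mem_ball, Subtype.dist_eq]; exact hd
    exact hball this
  · rintro ⟨hz, ε, εpos, h⟩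
    have hzA : z ∈ affineSpan ℝ s := subset_affineSpan ℝ s hz
    refine mem_intrinsicInterior.2 ⟨⟨z, hzA⟩, ?_, rfl⟩
    rw [mem_interior_iff_mem_nhds, Metric.mem_nhds_iff]
    refine ⟨ε, εpos, fun q hq => ?_⟩
    rw [Metric.mem_ball, Subtype.dist_eq] at hq
    exact h q q.2 hq

lemma ri_char [FiniteDimensional ℝ E] {s : Set E} (hs : Convex ℝ s) {z : E} :
    z ∈ intrinsicInterior ℝ s ↔
      z ∈ s ∧ ∀ w ∈ s, ∃ t : ℝ, 1 < t ∧ w + t • (z - w) ∈ s := by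
  constructor
  · rw [mem_ri_iff']
    rintro ⟨hz, ε, εpos, hε⟩
    refine ⟨hz, fun w hw => ?_⟩
    set δ : ℝ := ε / (2 * (‖z - w‖ + 1)) with hδ
    have hnorm : (0:ℝ) < ‖z - w‖ + 1 := by positivity
    have hδpos : 0 < δ := div_pos εpos (by positivity)
    refine ⟨1 + δ, by linarith, ?_⟩
    have hpt : w + (1 + δ) • (z - w) = δ • (z - w) + z := by
      rw [add_smul, one_smul]; abel
    have hA : w + (1 + δ) • (z - w) ∈ (affineSpan ℝ s : Set E) := by
      rw [hpt]
      have := AffineSubspace.smul_vsub_vadd_mem (affineSpan ℝ s) δ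
        (subset_affineSpan ℝ s hz) (subset_affineSpan ℝ s hw) (subset_affineSpan ℝ s hz)
      simpa [vsub_eq_sub, vadd_eq_add] using this
    refine hε _ hA ?_
    rw [hpt]
    have hd : dist (δ • (z - w) + z) z = δ * ‖z - w‖ := by
      rw [dist_eq_norm]
      simp [norm_smul, abs_of_pos hδpos]
    rw [hd]
    have h1 : δ * ‖z - w‖ ≤ δ * (‖z - w‖ + 1) := by nlinarith
    have h2 : δ * (‖z - w‖ + 1) = ε / 2 := by
      rw [hδ]; field_simp
    linarith
  · rintro ⟨hz, hP⟩
    obtain ⟨u, hu⟩ := Set.Nonempty.intrinsicInterior hs ⟨z, hz⟩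
    rw [mem_ri_iff'] at hu
    obtain ⟨hus, ε, εpos, hε⟩ := hu
    obtain ⟨t, ht, hp⟩ := hP u hus
    have ht0 : (0:ℝ) < t := by linarith
    have ht1 : (0:ℝ) < t - 1 := by linarith
    have hlam1 : (0:ℝ) < 1 - 1/t := by
      rw [sub_pos, div_lt_one ht0]; linarith
    rw [mem_ri_iff']
    refine ⟨hz, ε * (1 - 1/t), by positivity, fun q hqA hqd => ?_⟩
    set c : ℝ := t / (t - 1) with hc
    have hcpos : 0 < c := by positivity
    set u' := u + c • (q - z) with hu'
    have hu'A : u' ∈ (affineSpan ℝ s : Set E) := by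
      have h1 : c • (q - z) + u ∈ affineSpan ℝ s := by
        simpa [vsub_eq_sub, vadd_eq_add] using AffineSubspace.smul_vsub_vadd_mem
          (affineSpan ℝ s) c hqA (subset_affineSpan ℝ s hz) (subset_affineSpan ℝ s hus)
      rw [hu', add_comm]
      exact h1
    have hu's : u' ∈ s := by
      refine hε u' hu'A ?_
      have hd : dist u' u = c * ‖q - z‖ := by
        rw [hu', dist_eq_norm]
        simp [norm_smul, abs_of_pos hcpos]
      rw [hd]
      rw [dist_eq_norm] at hqd
      calc c * ‖q - z‖ < c * (ε * (1 - 1/t)) := by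
            exact mul_lt_mul_of_pos_left hqd hcpos
        _ = ε := by
            rw [hc]; field_simp
    have hcomb : (1 - 1/t) • u' + (1/t) • (u + t • (z - u)) = q := by
      rw [hu', hc]
      match_scalars <;> field_simp <;> ring
    have hmem := hs hu's hp (a := 1 - 1/t) (b := 1/t) (le_of_lt hlam1)
      (by positivity) (by ring)
    rwa [hcomb] at hmem

lemma exists_gt_helper {s : Set E} (hs : Convex ℝ s) {p1 p2 p3 z : E}
    (h2 : p2 ∈ s) (h3 : p3 ∈ s) {c1 c2 c3 : ℝ} (hc1 : 0 < c1) (hc1' : c1 < 1)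
    (hc2 : 0 ≤ c2) (hc3 : 0 ≤ c3) (hsum : c1 + c2 + c3 = 1)
    (hz : z = c1 • p1 + c2 • p2 + c3 • p3) :
    ∃ t : ℝ, 1 < t ∧ p1 + t • (z - p1) ∈ s := by
  have hd : (0:ℝ) < 1 - c1 := by linarith
  have hQ : (c2/(1-c1)) • p2 + (c3/(1-c1)) • p3 ∈ s :=
    hs h2 h3 (div_nonneg hc2 hd.le) (div_nonneg hc3 hd.le)
      (by rw [← add_div, div_eq_one_iff_eq hd.ne']; linarith)
  refine ⟨1/(1-c1), ?_, ?_⟩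
  · rw [lt_div_iff₀ hd]; linarith
  · have he : p1 + (1/(1-c1)) • (z - p1) = (c2/(1-c1)) • p2 + (c3/(1-c1)) • p3 := by
      rw [hz]
      match_scalars <;> field_simp <;> ring
    rwa [he]

/-- **Rockafellar's theorem on relative interiors of convex graphs.**
`(x, y)` belongs to the relative interior of the graph of a convex set-valued
mapping `F` iff `x` is in the relative interior of `dom F` and `y` is in the
relative interior of `F x`. -/
theorem stmt_0 (n m : ℕ) (F : EuclideanSpace ℝ (Fin n) → Set (EuclideanSpace ℝ (Fin m)))
    (hconv : Convex ℝ {p : EuclideanSpace ℝ (Fin n) × EuclideanSpace ℝ (Fin m) | p.2 ∈ F p.1})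
    (x : EuclideanSpace ℝ (Fin n)) (y : EuclideanSpace ℝ (Fin m)) :
    (x, y) ∈ intrinsicInterior ℝ
        {p : EuclideanSpace ℝ (Fin n) × EuclideanSpace ℝ (Fin m) | p.2 ∈ F p.1} ↔
      x ∈ intrinsicInterior ℝ {x' | (F x').Nonempty} ∧ y ∈ intrinsicInterior ℝ (F x) := by
  have hD : Convex ℝ {x' | (F x').Nonempty} := by
    rintro x1 hx1 x2 hx2 a b ha hb hab
    obtain ⟨y1, hy1⟩ := hx1
    obtain ⟨y2, hy2⟩ := hx2
    have h := hconv (show ((x1, y1) : _ × _) ∈ _ from hy1)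
      (show ((x2, y2) : _ × _) ∈ _ from hy2) ha hb hab
    exact ⟨a • y1 + b • y2, h⟩
  have hFx : Convex ℝ (F x) := by
    rintro y1 hy1 y2 hy2 a b ha hb hab
    have h := hconv (show ((x, y1) : _ × _) ∈ _ from hy1)
      (show ((x, y2) : _ × _) ∈ _ from hy2) ha hb hab
    have hx : a • x + b • x = x := Convex.combo_self hab x
    have h2 : a • y1 + b • y2 ∈ F (a • x + b • x) := h
    rwa [hx] at h2
  rw [ri_char hconv, ri_char hD, ri_char hFx]
  constructor
  · rintro ⟨hxy, hP⟩
    refine ⟨⟨⟨y, hxy⟩, ?_⟩, hxy, ?_⟩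
    · intro w hw
      obtain ⟨y', hy'⟩ := hw
      obtain ⟨t, ht, hmem⟩ := hP (w, y') hy'
      exact ⟨t, ht, ⟨y' + t • (y - y'), hmem⟩⟩
    · intro w hw
      obtain ⟨t, ht, hmem⟩ := hP (x, w) hw
      refine ⟨t, ht, ?_⟩
      have e : x + t • (x - x) = x := by simp
      have h2 : w + t • (y - w) ∈ F (x + t • (x - x)) := hmem
      rwa [e] at h2
  · rintro ⟨⟨hxD, hPx⟩, hyF, hPy⟩
    refine ⟨hyF, ?_⟩
    rintro ⟨x', y'⟩ hx'y'
    obtain ⟨μ, hμ, hμmem⟩ := hPx x' ⟨y', hx'y'⟩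
    obtain ⟨yh, hyh⟩ := hμmem
    have hμ0 : (0:ℝ) < μ := by linarith
    have hμ0' : μ ≠ 0 := hμ0.ne'
    have hμ1 : (0:ℝ) < 1 - 1/μ := by
      rw [sub_pos, div_lt_one hμ0]; linarith
    have hmid := hconv (show ((x', y') : _ × _) ∈ _ from hx'y')
      (show ((x' + μ • (x - x'), yh) : _ × _) ∈ _ from hyh)
      (a := 1 - 1/μ) (b := 1/μ) hμ1.le (by positivity) (by ring)
    have hfst : (1 - 1/μ) • x' + (1/μ) • (x' + μ • (x - x')) = x := by
      match_scalars <;> field_simp <;> ring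
    have hytF : (1 - 1/μ) • y' + (1/μ) • yh ∈ F x := by
      have h2 : (1 - 1/μ) • y' + (1/μ) • yh ∈
          F ((1 - 1/μ) • x' + (1/μ) • (x' + μ • (x - x'))) := hmid
      rwa [hfst] at h2
    obtain ⟨ν, hν, hνmem⟩ := hPy _ hytF
    have hν0 : (0:ℝ) < ν := by linarith
    have hν0' : ν ≠ 0 := hν0.ne'
    have hν1 : (0:ℝ) < 1 - 1/ν := by
      rw [sub_pos, div_lt_one hν0]; linarith
    refine exists_gt_helper hconv (p2 := (x' + μ • (x - x'), yh))
      (p3 := (x, ((1 - 1/μ) • y' + (1/μ) • yh) + ν • (y - ((1 - 1/μ) • y' + (1/μ) • yh))))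
      hyh hνmem
      (c1 := (1 - 1/ν) * (1 - 1/μ)) (c2 := (1 - 1/ν) * (1/μ)) (c3 := 1/ν)
      (by positivity) (by nlinarith [div_pos one_pos hμ0, div_pos one_pos hν0])
      (by positivity) (by positivity) (by field_simp; ring) ?_
    simp only [Prod.smul_mk, Prod.mk_add_mk, Prod.mk.injEq]
    constructor
    · match_scalars <;> field_simp <;> ring
    · match_scalars <;> field_simp <;> ring
end

section
/- Let f : ℝⁿ → (-∞, ∞] be a proper convex function. Then the relative interior of the epigraph of f equals {(x, λ) ∈ ℝⁿ × ℝ : x ∈ ri(dom(f)) and f(x) < λ}. -/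
open Set

section Aux

variable {V : Type*} [NormedAddCommGroup V] [NormedSpace ℝ V] {s : Set V}

private lemma comboMemSpan {y w : V} (hy : y ∈ affineSpan ℝ s) (hw : w ∈ affineSpan ℝ s)
    (t : ℝ) : (1 - t) • y + t • w ∈ affineSpan ℝ s := by
  rw [← AffineMap.lineMap_apply_module]
  exact AffineMap.lineMap_mem t hy hw

/-- Extension lemma: a point of the intrinsic interior can be extended slightly past,
relative to any point of the set. -/
theorem riExtend {x y : V} (hx : x ∈ intrinsicInterior ℝ s) (hy : y ∈ s) :
    ∃ μ : ℝ, 1 < μ ∧ (1 - μ) • y + μ • x ∈ s := by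
  obtain ⟨x', hx', rfl⟩ := mem_intrinsicInterior.1 hx
  have hyA : y ∈ affineSpan ℝ s := subset_affineSpan ℝ s hy
  let c : ℝ → affineSpan ℝ s := fun μ => ⟨(1 - μ) • y + μ • (x' : V), comboMemSpan hyA x'.2 μ⟩
  have hc : Continuous c := by
    apply Continuous.subtype_mk
    fun_prop
  have hopen : IsOpen (c ⁻¹' interior ((↑) ⁻¹' s : Set (affineSpan ℝ s))) :=
    isOpen_interior.preimage hc
  have h1 : (1 : ℝ) ∈ c ⁻¹' interior ((↑) ⁻¹' s : Set (affineSpan ℝ s)) := by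
    have : c 1 = x' := Subtype.ext (by simp [c])
    simpa [this] using hx'
  obtain ⟨ε, hε, hball⟩ := Metric.isOpen_iff.1 hopen 1 h1
  refine ⟨1 + ε / 2, by linarith, ?_⟩
  have hmem : c (1 + ε / 2) ∈ interior ((↑) ⁻¹' s : Set (affineSpan ℝ s)) := by
    apply hball
    simp only [Metric.mem_ball, Real.dist_eq]
    rw [show (1 + ε / 2 - 1 : ℝ) = ε / 2 by ring, abs_of_pos (by linarith)]
    linarith
  have h2 : c (1 + ε / 2) ∈ ((↑) ⁻¹' s : Set (affineSpan ℝ s)) := interior_subset hmem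
  exact h2

/-- Line segment principle for the intrinsic interior. -/
theorem riSegment (hs : Convex ℝ s) {x y z : V} (hx : x ∈ intrinsicInterior ℝ s)
    (hy : y ∈ s) (hz : z ∈ openSegment ℝ x y) : z ∈ intrinsicInterior ℝ s := by
  obtain ⟨a, b, ha, hb, hab, rfl⟩ := hz
  obtain ⟨x', hx', hvx⟩ := mem_intrinsicInterior.1 hx
  have hyA : y ∈ affineSpan ℝ s := subset_affineSpan ℝ s hy
  have ha0 : a ≠ 0 := ne_of_gt ha
  let H : affineSpan ℝ s → affineSpan ℝ s := fun q =>
    ⟨(1 - a) • y + a • (q : V), comboMemSpan hyA q.2 a⟩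
  let G : affineSpan ℝ s → affineSpan ℝ s := fun q =>
    ⟨(1 - a⁻¹) • y + a⁻¹ • (q : V), comboMemSpan hyA q.2 a⁻¹⟩
  have hcombo : ∀ (c d : ℝ) (q : V), c * d = 1 →
      (1 - c) • y + c • ((1 - d) • y + d • q) = q := by
    intro c d q hcd
    rw [smul_add, smul_smul, smul_smul, ← add_assoc, ← add_smul]
    have h1 : (1 - c) + c * (1 - d) = 0 := by
      have : c * d = 1 := hcd
      nlinarith
    rw [h1, hcd, zero_smul, zero_add, one_smul]
  have hHG : ∀ q, G (H q) = q := fun q =>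
    Subtype.ext (hcombo a⁻¹ a q (inv_mul_cancel₀ ha0))
  have hGH : ∀ q, H (G q) = q := fun q =>
    Subtype.ext (hcombo a a⁻¹ q (mul_inv_cancel₀ ha0))
  have hG : Continuous G := by
    apply Continuous.subtype_mk
    fun_prop
  have himg : H '' interior ((↑) ⁻¹' s : Set (affineSpan ℝ s))
      = G ⁻¹' interior ((↑) ⁻¹' s : Set (affineSpan ℝ s)) := by
    ext q
    constructor
    · rintro ⟨r, hr, rfl⟩; simpa [hHG] using hr
    · intro hq; exact ⟨G q, hq, hGH q⟩
  have hopen : IsOpen (H '' interior ((↑) ⁻¹' s : Set (affineSpan ℝ s))) := by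
    rw [himg]; exact isOpen_interior.preimage hG
  have hsub : H '' interior ((↑) ⁻¹' s : Set (affineSpan ℝ s))
      ⊆ ((↑) ⁻¹' s : Set (affineSpan ℝ s)) := by
    rintro _ ⟨r, hr, rfl⟩
    have hrs : r ∈ ((↑) ⁻¹' s : Set (affineSpan ℝ s)) := interior_subset hr
    show (1 - a) • y + a • (r : V) ∈ s
    have h1a : (1 - a : ℝ) = b := by linarith
    rw [h1a]
    exact hs hy hrs hb.le ha.le (by linarith)
  have hHx' : H x' ∈ interior ((↑) ⁻¹' s : Set (affineSpan ℝ s)) :=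
    interior_maximal hsub hopen ⟨x', hx', rfl⟩
  refine mem_intrinsicInterior.2 ⟨H x', hHx', ?_⟩
  show (1 - a) • y + a • (x' : V) = a • x + b • y
  rw [hvx]
  have h1a : (1 - a : ℝ) = b := by linarith
  rw [h1a, add_comm]

/-- Converse of the extension lemma at a single intrinsic-interior witness. -/
theorem riOfExtend (hs : Convex ℝ s) {q p : V} (hq : q ∈ intrinsicInterior ℝ s) {μ : ℝ}
    (hμ : 1 < μ) (hw : (1 - μ) • q + μ • p ∈ s) : p ∈ intrinsicInterior ℝ s := by
  have hμ0 : (0 : ℝ) < μ := lt_trans one_pos hμ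
  have key : p ∈ openSegment ℝ q ((1 - μ) • q + μ • p) := by
    refine ⟨1 - 1/μ, 1/μ, by
      have : 1/μ < 1 := by rw [div_lt_one hμ0]; exact hμ
      linarith, by positivity, by ring, ?_⟩
    rw [smul_add, smul_smul, smul_smul, ← add_assoc, ← add_smul]
    have h1 : (1 - 1/μ) + (1/μ) * (1 - μ) = 0 := by field_simp; ring
    have h2 : (1/μ) * μ = 1 := by field_simp
    rw [h1, h2, zero_smul, zero_add, one_smul]
  exact riSegment hs hq hw key

end Aux

/-- Relative interior of the epigraph of a proper convex function `f`:
`ri(epi f) = {(x, λ) | x ∈ ri(dom f), f x < λ}`. -/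
theorem stmt_2 (n : ℕ) (f : EuclideanSpace ℝ (Fin n) → EReal)
    (hproper : ∃ x, f x ≠ ⊤) (hbot : ∀ x, f x ≠ ⊥)
    (hconv : Convex ℝ {p : EuclideanSpace ℝ (Fin n) × ℝ | f p.1 ≤ (p.2 : EReal)}) :
    intrinsicInterior ℝ {p : EuclideanSpace ℝ (Fin n) × ℝ | f p.1 ≤ (p.2 : EReal)} =
      {p : EuclideanSpace ℝ (Fin n) × ℝ |
        p.1 ∈ intrinsicInterior ℝ {x | f x < ⊤} ∧ f p.1 < (p.2 : EReal)} := by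
  classical
  set C : Set (EuclideanSpace ℝ (Fin n) × ℝ) := {p | f p.1 ≤ (p.2 : EReal)} with hC
  set D : Set (EuclideanSpace ℝ (Fin n)) := {x | f x < ⊤} with hD
  -- basic facts
  have hfin : ∀ x ∈ D, ((f x).toReal : EReal) = f x := fun x hx =>
    EReal.coe_toReal (ne_of_lt hx) (hbot x)
  have hmemC : ∀ x ∈ D, (x, (f x).toReal) ∈ C := by
    intro x hx; show f x ≤ _; rw [hfin x hx]
  have hCD : ∀ p : EuclideanSpace ℝ (Fin n) × ℝ, p ∈ C → p.1 ∈ D := by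
    intro p hp
    have h : f p.1 ≤ (p.2 : EReal) := hp
    exact lt_of_le_of_lt h (EReal.coe_lt_top p.2)
  have hDconv : Convex ℝ D := by
    intro x hx y hy a b ha hb hab
    have := hconv (hmemC x hx) (hmemC y hy) ha hb hab
    exact hCD _ this
  obtain ⟨x₀, hx₀⟩ := hproper
  have hx₀D : x₀ ∈ D := lt_top_iff_ne_top.2 hx₀
  have hDne : D.Nonempty := ⟨x₀, hx₀D⟩
  have hCne : C.Nonempty := ⟨_, hmemC x₀ hx₀D⟩
  ext ⟨x, l⟩
  simp only [mem_setOf_eq]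
  constructor
  · intro h
    have hmem : (x, l) ∈ C := intrinsicInterior_subset h
    have hxD : x ∈ D := hCD _ hmem
    constructor
    · -- x ∈ ri D
      obtain ⟨z₀, hz₀⟩ := hDne.intrinsicInterior hDconv
      have hz₀D : z₀ ∈ D := intrinsicInterior_subset hz₀
      obtain ⟨μ, hμ, hcomb⟩ := riExtend h (hmemC z₀ hz₀D)
      have hfirst : (1 - μ) • z₀ + μ • x ∈ D := by
        have := hCD _ hcomb
        simpa using this
      exact riOfExtend hDconv hz₀ hμ hfirst
    · -- f x < l
      have hy : (x, l + 1) ∈ C := by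
        have hm : f x ≤ (l : EReal) := hmem
        show f x ≤ ((l + 1 : ℝ) : EReal)
        exact le_trans hm (by exact_mod_cast EReal.coe_le_coe_iff.2 (by linarith))
      obtain ⟨μ, hμ, hcomb⟩ := riExtend h hy
      have h2 : f ((1 - μ) • x + μ • x) ≤ (((1 - μ) * (l + 1) + μ * l : ℝ) : EReal) := hcomb
      have hx1 : (1 - μ) • x + μ • x = x := by
        rw [← add_smul]; simp
    -- second coordinate
      rw [hx1] at h2
      refine lt_of_le_of_lt h2 ?_
      exact_mod_cast EReal.coe_lt_coe_iff.2 (by nlinarith)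
  · rintro ⟨hxri, hfx⟩
    have hxD : x ∈ D := intrinsicInterior_subset hxri
    -- Step 1: some (x, l₀) ∈ ri C
    obtain ⟨⟨x₁, ν₁⟩, hx₁⟩ := hCne.intrinsicInterior hconv
    have hx₁C : (x₁, ν₁) ∈ C := intrinsicInterior_subset hx₁
    have hx₁D : x₁ ∈ D := hCD _ hx₁C
    obtain ⟨μ, hμ, hzD⟩ := riExtend hxri hx₁D
    set z := (1 - μ) • x₁ + μ • x with hz
    have hμ0 : (0 : ℝ) < μ := lt_trans one_pos hμ
    set sz := (f z).toReal with hsz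
    have hzC : (z, sz) ∈ C := hmemC z hzD
    have hxseg : ((x : EuclideanSpace ℝ (Fin n)), ((1 - 1/μ) * ν₁ + (1/μ) * sz : ℝ)) ∈
        openSegment ℝ ((x₁, ν₁) : EuclideanSpace ℝ (Fin n) × ℝ) (z, sz) := by
      refine ⟨1 - 1/μ, 1/μ, by
        have : 1/μ < 1 := by rw [div_lt_one hμ0]; exact hμ
        linarith, by positivity, by ring, ?_⟩
      have hfst : (1 - 1/μ) • x₁ + (1/μ) • z = x := by
        rw [hz, smul_add, smul_smul, smul_smul, ← add_assoc, ← add_smul]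
        have h1 : (1 - 1/μ) + (1/μ) * (1 - μ) = 0 := by field_simp; ring
        have h2 : (1/μ) * μ = 1 := by field_simp
        rw [h1, h2, zero_smul, zero_add, one_smul]
      rw [Prod.smul_mk, Prod.smul_mk, Prod.mk_add_mk, hfst]
      rfl
    have hstep1 : ((x : EuclideanSpace ℝ (Fin n)), ((1 - 1/μ) * ν₁ + (1/μ) * sz : ℝ)) ∈
        intrinsicInterior ℝ C := riSegment hconv hx₁ hzC hxseg
    set l₀ : ℝ := (1 - 1/μ) * ν₁ + (1/μ) * sz with hl₀
    -- Step 2: move vertically from l₀ to l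
    set a := (f x).toReal with ha
    have hfa : ((a : ℝ) : EReal) = f x := hfin x hxD
    have hal : a < l := by
      rw [← EReal.coe_lt_coe_iff]; rw [hfa]; exact hfx
    set ε : ℝ := min 1 ((l - a) / (2 * (|l - l₀| + 1))) with hε
    have hεpos : 0 < ε := by
      apply lt_min one_pos
      apply div_pos (by linarith)
      positivity
    have hkey : a ≤ (1 - (1 + ε)) * l₀ + (1 + ε) * l := by
      have h1 : (1 - (1 + ε)) * l₀ + (1 + ε) * l = l + ε * (l - l₀) := by ring
      rw [h1]
      have h2 : ε * (l - l₀) ≥ -(ε * |l - l₀|) := by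
        have := neg_abs_le (l - l₀)
        nlinarith [abs_nonneg (l - l₀)]
      have h3 : ε * |l - l₀| ≤ (l - a) / 2 := by
        have hε2 : ε ≤ (l - a) / (2 * (|l - l₀| + 1)) := min_le_right _ _
        have hpos : (0:ℝ) < 2 * (|l - l₀| + 1) := by positivity
        calc ε * |l - l₀| ≤ (l - a) / (2 * (|l - l₀| + 1)) * |l - l₀| := by
              apply mul_le_mul_of_nonneg_right hε2 (abs_nonneg _)
          _ ≤ (l - a) / 2 := by
              rw [div_mul_eq_mul_div, div_le_div_iff₀ hpos (by norm_num)]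
              nlinarith [abs_nonneg (l - l₀)]
      linarith
    have hwC : ((1 : ℝ) - (1 + ε)) • ((x, l₀) : EuclideanSpace ℝ (Fin n) × ℝ)
        + (1 + ε) • ((x, l) : EuclideanSpace ℝ (Fin n) × ℝ) ∈ C := by
      rw [Prod.smul_mk, Prod.smul_mk, Prod.mk_add_mk]
      show f ((1 - (1 + ε)) • x + (1 + ε) • x) ≤ _
      have hx1 : (1 - (1 + ε)) • x + (1 + ε) • x = x := by
        rw [← add_smul]; simp
      rw [hx1, ← hfa]
      exact_mod_cast EReal.coe_le_coe_iff.2 hkey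
    exact riOfExtend hconv hstep1 (by linarith : (1:ℝ) < 1 + ε) hwC
end

section
/- Let Ω be a nonempty convex subset of ℝⁿ and x̄ ∈ Ω. Then x̄ ∈ ri(Ω) if and only if the normal cone N(x̄; Ω) is a linear subspace of ℝⁿ. -/
open Set

variable {E : Type*} [NormedAddCommGroup E] [NormedSpace ℝ E]

lemma ri_char_s5 {Ω : Set E} {x : E} :
    x ∈ intrinsicInterior ℝ Ω ↔ x ∈ affineSpan ℝ Ω ∧
      ∃ ε > 0, ∀ z ∈ affineSpan ℝ Ω, dist z x < ε → z ∈ Ω := by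
  constructor
  · rintro ⟨y, hy, rfl⟩
    refine ⟨y.2, ?_⟩
    rw [mem_interior_iff_mem_nhds, Metric.mem_nhds_iff] at hy
    obtain ⟨ε, hε, hball⟩ := hy
    refine ⟨ε, hε, fun z hz hdz => ?_⟩
    exact hball (show (⟨z, hz⟩ : affineSpan ℝ Ω) ∈ Metric.ball y ε by
      simpa [Metric.mem_ball, Subtype.dist_eq] using hdz)
  · rintro ⟨hxspan, ε, hε, h⟩
    refine ⟨⟨x, hxspan⟩, ?_, rfl⟩
    rw [mem_interior_iff_mem_nhds, Metric.mem_nhds_iff]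
    exact ⟨ε, hε, fun w hw => h w w.2 (by simpa [Metric.mem_ball, Subtype.dist_eq] using hw)⟩

lemma ri_segment {Ω : Set E} (hconv : Convex ℝ Ω) {x y : E} (hx : x ∈ Ω)
    (hy : y ∈ intrinsicInterior ℝ Ω) {t : ℝ} (ht0 : 0 < t) (ht1 : t ≤ 1) :
    x + t • (y - x) ∈ intrinsicInterior ℝ Ω := by
  rw [ri_char_s5] at hy ⊢
  obtain ⟨hyspan, ε, hε, hball⟩ := hy
  have hxspan : x ∈ affineSpan ℝ Ω := subset_affineSpan ℝ Ω hx
  have hpspan : x + t • (y - x) ∈ affineSpan ℝ Ω := by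
    have := AffineSubspace.vadd_mem_of_mem_direction
      (Submodule.smul_mem _ t (AffineSubspace.vsub_mem_direction hyspan hxspan)) hxspan
    simpa [vadd_eq_add, add_comm] using this
  refine ⟨hpspan, t * ε, by positivity, fun z hz hdz => ?_⟩
  set p := x + t • (y - x) with hp
  set y' := y + t⁻¹ • (z - p) with hy'
  have hy'span : y' ∈ affineSpan ℝ Ω := by
    have := AffineSubspace.vadd_mem_of_mem_direction
      (Submodule.smul_mem _ t⁻¹ (AffineSubspace.vsub_mem_direction hz hpspan)) hyspan
    simpa [vadd_eq_add, add_comm] using this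
  have hy'Ω : y' ∈ Ω := by
    apply hball _ hy'span
    have hd : dist y' y = t⁻¹ * dist z p := by
      simp [hy', dist_eq_norm, norm_smul, abs_of_pos (inv_pos.2 ht0), add_sub_cancel_left, ht0.le]
    rw [hd]
    calc t⁻¹ * dist z p < t⁻¹ * (t * ε) := by
          exact mul_lt_mul_of_pos_left hdz (inv_pos.2 ht0)
      _ = ε := by field_simp
  have hcomb := hconv hx hy'Ω (by linarith : (0:ℝ) ≤ 1 - t) ht0.le (by ring)
  have hzeq : (1 - t) • x + t • y' = z := by
    simp only [hy', hp]
    match_scalars <;> field_simp <;> ring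
  rwa [hzeq] at hcomb

/-- `x̄ ∈ ri Ω` iff the normal cone `N(x̄; Ω)` is a linear subspace. -/
theorem stmt_5 (n : ℕ) (Ω : Set (EuclideanSpace ℝ (Fin n))) (hΩ : Ω.Nonempty)
    (hconv : Convex ℝ Ω) (xbar : EuclideanSpace ℝ (Fin n)) (hx : xbar ∈ Ω) :
    xbar ∈ intrinsicInterior ℝ Ω ↔
      ∃ S : Submodule ℝ (EuclideanSpace ℝ (Fin n)),
        (S : Set (EuclideanSpace ℝ (Fin n))) =
          {v | ∀ x ∈ Ω, (inner ℝ v (x - xbar) : ℝ) ≤ 0} := by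
  have hxspan : xbar ∈ affineSpan ℝ Ω := subset_affineSpan ℝ Ω hx
  constructor
  · intro hri
    obtain ⟨-, ε, hε, hball⟩ := ri_char_s5.mp hri
    have key : ∀ v : EuclideanSpace ℝ (Fin n), (∀ x ∈ Ω, (inner ℝ v (x - xbar) : ℝ) ≤ 0) →
        ∀ x ∈ Ω, (inner ℝ v (x - xbar) : ℝ) = 0 := by
      intro v hv x hxΩ
      refine le_antisymm (hv x hxΩ) ?_
      set t : ℝ := ε / (2 * (‖xbar - x‖ + 1)) with htdef
      have ht : 0 < t := by positivity
      have hzΩ : xbar + t • (xbar - x) ∈ Ω := by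
        have hspan2 : xbar + t • (xbar - x) ∈ affineSpan ℝ Ω := by
          have := AffineSubspace.vadd_mem_of_mem_direction
            (Submodule.smul_mem _ t (AffineSubspace.vsub_mem_direction hxspan
              (subset_affineSpan ℝ Ω hxΩ))) hxspan
          simpa [vadd_eq_add, add_comm] using this
        apply hball _ hspan2
        · have : dist (xbar + t • (xbar - x)) xbar = t * ‖xbar - x‖ := by
            simp [dist_eq_norm, norm_smul, abs_of_pos ht]
          rw [this, htdef]
          have h1 : (0:ℝ) < ‖xbar - x‖ + 1 := by positivity
          rw [div_mul_eq_mul_div, div_lt_iff₀ (by positivity)]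
          nlinarith [norm_nonneg (xbar - x)]
      have h2 := hv _ hzΩ
      have h3 : (inner ℝ v ((xbar + t • (xbar - x)) - xbar) : ℝ)
          = -(t * (inner ℝ v (x - xbar) : ℝ)) := by
        have : (xbar + t • (xbar - x)) - xbar = (-t) • (x - xbar) := by
          match_scalars <;> ring
        rw [this, real_inner_smul_right]; ring
      rw [h3] at h2
      nlinarith
    refine ⟨{ carrier := {v | ∀ x ∈ Ω, (inner ℝ v (x - xbar) : ℝ) ≤ 0},
              add_mem' := ?_, zero_mem' := ?_, smul_mem' := ?_ }, rfl⟩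
    · intro a b ha hb x hxΩ
      have := add_nonpos (ha x hxΩ) (hb x hxΩ)
      rwa [← inner_add_left] at this
    · intro x hxΩ; simp
    · intro c v hv x hxΩ
      have h0 := key v hv x hxΩ
      rw [real_inner_smul_left, h0, mul_zero]
  · rintro ⟨S, hS⟩
    by_contra hri
    obtain ⟨y, hy⟩ := hΩ.intrinsicInterior hconv
    set V := (affineSpan ℝ Ω).direction
    set A : Set V := {w : V | (w : EuclideanSpace ℝ (Fin n)) + xbar ∈ intrinsicInterior ℝ Ω} with hA
    have hAopen : IsOpen A := by
      rw [Metric.isOpen_iff]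
      intro a ha
      obtain ⟨haspan, ε, hε, hball⟩ := ri_char_s5.mp ha
      refine ⟨ε / 2, by positivity, fun w hw => ?_⟩
      rw [Metric.mem_ball, Subtype.dist_eq] at hw
      refine ri_char_s5.mpr ⟨?_, ε / 2, by positivity, fun z hz hdz => ?_⟩
      · simpa [vadd_eq_add] using AffineSubspace.vadd_mem_of_mem_direction w.2 hxspan
      · apply hball _ hz
        have : dist ((w : EuclideanSpace ℝ (Fin n)) + xbar) ((a : EuclideanSpace ℝ (Fin n)) + xbar) = dist (w : EuclideanSpace ℝ (Fin n)) (a : EuclideanSpace ℝ (Fin n)) := by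
          simp [dist_eq_norm]
        calc dist z ((a : EuclideanSpace ℝ (Fin n)) + xbar) ≤ dist z ((w : EuclideanSpace ℝ (Fin n)) + xbar)
              + dist ((w : EuclideanSpace ℝ (Fin n)) + xbar) ((a : EuclideanSpace ℝ (Fin n)) + xbar) := dist_triangle _ _ _
          _ < ε / 2 + ε / 2 := by rw [this]; exact add_lt_add hdz hw
          _ = ε := by ring
    have hAconv : Convex ℝ A := by
      intro a ha b hb p q hp hq hpq
      show ((p • a + q • b : V) : EuclideanSpace ℝ (Fin n)) + xbar ∈ intrinsicInterior ℝ Ω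
      rcases eq_or_lt_of_le hq with hq0 | hqpos
      · have hp1 : p = 1 := by linarith
        have heq0 : ((p • a + q • b : V) : EuclideanSpace ℝ (Fin n)) + xbar
            = (a : EuclideanSpace ℝ (Fin n)) + xbar := by
          rw [← hq0, hp1]; push_cast; simp
        rw [heq0]; exact ha
      · have hkey := ri_segment hconv (intrinsicInterior_subset ha) hb hqpos
          (by linarith : q ≤ 1)
        have heq : ((a : EuclideanSpace ℝ (Fin n)) + xbar) + q • (((b : EuclideanSpace ℝ (Fin n)) + xbar) - ((a : EuclideanSpace ℝ (Fin n)) + xbar))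
            = ((p • a + q • b : V) : EuclideanSpace ℝ (Fin n)) + xbar := by
          push_cast
          match_scalars <;> linarith
        rwa [heq] at hkey
    have h0A : (0 : V) ∉ A := by simpa [hA] using hri
    obtain ⟨f, hf⟩ := geometric_hahn_banach_open_point hAconv hAopen h0A
    obtain ⟨v, hvrepr⟩ : ∃ v : EuclideanSpace ℝ (Fin n),
        ∀ w : V, (inner ℝ v (w : EuclideanSpace ℝ (Fin n)) : ℝ) = f w := by
      refine ⟨((InnerProductSpace.toDual ℝ V).symm f : V), fun w => ?_⟩
      rw [← Submodule.coe_inner]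
      exact InnerProductSpace.toDual_symm_apply
    have hvlt : ∀ z ∈ intrinsicInterior ℝ Ω, (inner ℝ v (z - xbar) : ℝ) < 0 := by
      intro z hz
      have hzspan : z ∈ affineSpan ℝ Ω :=
        subset_affineSpan ℝ Ω (intrinsicInterior_subset hz)
      set w : V := ⟨z - xbar, AffineSubspace.vsub_mem_direction hzspan hxspan⟩ with hw
      have hwA : w ∈ A := by
        show (w : EuclideanSpace ℝ (Fin n)) + xbar ∈ intrinsicInterior ℝ Ω
        show z - xbar + xbar ∈ intrinsicInterior ℝ Ω
        rwa [sub_add_cancel]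
      have h5 := hf w hwA
      rw [map_zero] at h5
      have h6 := hvrepr w
      rw [h6]
      exact h5
    have hvle : ∀ x ∈ Ω, (inner ℝ v (x - xbar) : ℝ) ≤ 0 := by
      intro x hxΩ
      set c : ℝ := inner ℝ v (x - xbar) with hc
      set d : ℝ := inner ℝ v (y - x) with hd
      have hlt : ∀ t : ℝ, 0 < t → t ≤ 1 → c + t * d < 0 := by
        intro t ht0 ht1
        have hp := ri_segment hconv hxΩ hy ht0 ht1
        have := hvlt _ hp
        have heq : (inner ℝ v ((x + t • (y - x)) - xbar) : ℝ) = c + t * d := by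
          have : (x + t • (y - x)) - xbar = (x - xbar) + t • (y - x) := by
            match_scalars <;> ring
          rw [this, inner_add_right, real_inner_smul_right]
        rwa [heq] at this
      by_contra hcpos
      push_neg at hcpos
      set t : ℝ := min 1 (c / (2 * (|d| + 1))) with ht
      have ht0 : 0 < t := lt_min one_pos (by positivity)
      have ht1 : t ≤ 1 := min_le_left _ _
      have htd : t ≤ c / (2 * (|d| + 1)) := min_le_right _ _
      have habs : t * d ≥ -(t * |d|) := by nlinarith [neg_abs_le d, ht0.le]
      have h2 : t * |d| ≤ c / 2 := by
        have h3 : t * (|d| + 1) ≤ c / 2 := by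
          rw [le_div_iff₀ (by positivity : (0:ℝ) < 2 * (|d| + 1))] at htd
          nlinarith
        nlinarith [abs_nonneg d, ht0.le]
      have := hlt t ht0 ht1
      nlinarith
    have hvS : v ∈ S := by rw [← SetLike.mem_coe, hS]; exact hvle
    have hnegS : -v ∈ S := S.neg_mem hvS
    have hneg : ∀ x ∈ Ω, (inner ℝ (-v) (x - xbar) : ℝ) ≤ 0 := by
      rw [← SetLike.mem_coe, hS] at hnegS; exact hnegS
    have h1 := hneg y (intrinsicInterior_subset hy)
    rw [inner_neg_left] at h1
    have h2 := hvlt y hy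
    linarith
end

section
/- Let Ω₁, …, Ω_m ⊂ ℝⁿ (m ≥ 2) be convex sets with ⋂_{i=1}^m ri(Ω_i) ≠ ∅. Then for all x̄ ∈ ⋂_{i=1}^m Ω_i, the normal cone to the intersection satisfies N(x̄; ⋂_{i=1}^m Ω_i) = Σ_{i=1}^m N(x̄; Ω_i). -/
open Set Pointwise RealInnerProductSpace Bornology Filter

noncomputable section NormalConeAux

variable {E : Type*} [NormedAddCommGroup E] [InnerProductSpace ℝ E]

/-- The cone generated by a set `D`. -/
def coneOf (D : Set E) : Set E := {w | ∃ s : ℝ, 0 ≤ s ∧ ∃ d ∈ D, w = s • d}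

lemma subset_coneOf (D : Set E) : D ⊆ coneOf D := fun d hd => ⟨1, zero_le_one, d, hd, (one_smul ℝ d).symm⟩

lemma coneOf_subset_span (D : Set E) : coneOf D ⊆ (Submodule.span ℝ D : Set E) := by
  rintro w ⟨s, hs, d, hd, rfl⟩
  exact Submodule.smul_mem _ s (Submodule.subset_span hd)

lemma smul_mem_coneOf {D : Set E} {w : E} (hw : w ∈ coneOf D) {c : ℝ} (hc : 0 ≤ c) :
    c • w ∈ coneOf D := by
  obtain ⟨s, hs, d, hd, rfl⟩ := hw
  exact ⟨c * s, mul_nonneg hc hs, d, hd, smul_smul c s d⟩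

lemma convex_coneOf {D : Set E} (hD : Convex ℝ D) (h0 : (0:E) ∈ D) : Convex ℝ (coneOf D) := by
  rintro x ⟨s, hs, d, hd, rfl⟩ y ⟨t, ht, e, he, rfl⟩ a b ha hb hab
  rcases eq_or_lt_of_le (add_nonneg (mul_nonneg ha hs) (mul_nonneg hb ht)) with h | h
  · -- a*s + b*t = 0, so a•s•d + b•t•e = 0
    have h1 : a * s = 0 := by nlinarith [mul_nonneg ha hs, mul_nonneg hb ht]
    have h2 : b * t = 0 := by nlinarith [mul_nonneg ha hs, mul_nonneg hb ht]
    refine ⟨0, le_refl _, 0, h0, ?_⟩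
    rw [smul_smul, smul_smul, h1, h2]
    simp
  · set r := a * s + b * t with hr
    refine ⟨r, le_of_lt h, (a * s / r) • d + (b * t / r) • e,
      hD hd he (by positivity) (by positivity) (by field_simp; exact hr.symm), ?_⟩
    rw [smul_add, smul_smul, smul_smul, smul_smul, smul_smul]
    rw [mul_div_cancel₀ _ (ne_of_gt h), mul_div_cancel₀ _ (ne_of_gt h)]

lemma coneOf_shrink {D : Set E} (hD : Convex ℝ D) (h0 : (0:E) ∈ D) {c : E} (hc : c ∈ coneOf D) :
    ∃ δ : ℝ, 0 < δ ∧ ∀ lam : ℝ, 0 < lam → lam ≤ δ → lam • c ∈ D := by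
  obtain ⟨s, hs, d, hd, rfl⟩ := hc
  rcases eq_or_lt_of_le hs with h | h
  · exact ⟨1, one_pos, fun lam _ _ => by rw [smul_smul, ← h, mul_zero, zero_smul]; exact h0⟩
  · refine ⟨1 / s, by positivity, fun lam hlam hle => ?_⟩
    rw [smul_smul]
    have h1 : lam * s ≤ 1 := by
      rw [le_div_iff₀ h] at hle
      linarith
    have h2 := hD hd h0 (le_of_lt (mul_pos hlam h)) (by linarith : (0:ℝ) ≤ 1 - lam * s) (by ring)
    simpa using h2


lemma ri_ball {D : Set E} {z : E} (hz : z ∈ intrinsicInterior ℝ D) :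
    ∃ ε : ℝ, 0 < ε ∧ z ∈ D ∧ ∀ y ∈ affineSpan ℝ D, dist y z < ε → y ∈ D := by
  rw [mem_intrinsicInterior] at hz
  obtain ⟨x, hx, rfl⟩ := hz
  have hx' := hx
  rw [mem_interior_iff_mem_nhds, Metric.mem_nhds_iff] at hx
  obtain ⟨ε, hε, hball⟩ := hx
  refine ⟨ε, hε, (interior_subset hx' : x ∈ Subtype.val ⁻¹' D), fun y hy hdist => ?_⟩
  have : (⟨y, hy⟩ : affineSpan ℝ D) ∈ Metric.ball x ε := by
    rw [Metric.mem_ball, Subtype.dist_eq]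
    exact hdist
  exact hball this

lemma span_subset_affineSpan {D : Set E} (h0 : (0:E) ∈ D) :
    (Submodule.span ℝ D : Set E) ⊆ (affineSpan ℝ D : Set E) := by
  intro w hw
  have hdir : Submodule.span ℝ D ≤ (affineSpan ℝ D).direction := by
    rw [direction_affineSpan]
    refine Submodule.span_le.2 fun d hd => ?_
    have : d -ᵥ (0:E) ∈ D -ᵥ D := Set.vsub_mem_vsub hd h0
    simpa [vectorSpan] using Submodule.subset_span this
  have := AffineSubspace.vadd_mem_of_mem_direction (hdir hw) (mem_affineSpan ℝ h0)
  simpa using this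


lemma span_le_direction {D : Set E} (h0 : (0:E) ∈ D) :
    Submodule.span ℝ D ≤ (affineSpan ℝ D).direction := by
  rw [direction_affineSpan]
  refine Submodule.span_le.2 fun d hd => ?_
  have : d -ᵥ (0:E) ∈ D -ᵥ D := Set.vsub_mem_vsub hd h0
  simpa [vectorSpan] using Submodule.subset_span this


lemma segment_mem_coneOf [FiniteDimensional ℝ E] {D : Set E} (hD : Convex ℝ D) (h0 : (0:E) ∈ D)
    (hcone : Convex ℝ (coneOf D))
    {z : E} (hzD : z ∈ D) (hz : ∃ ε : ℝ, 0 < ε ∧ ∀ y ∈ affineSpan ℝ D, dist y z < ε → y ∈ D)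
    {b : E} (hb : b ∈ closure (coneOf D)) {t : ℝ} (ht : 0 < t) (ht1 : t ≤ 1) :
    (1-t) • b + t • z ∈ coneOf D := by
  obtain ⟨ε, hε, hball⟩ := hz
  obtain ⟨b', hb', hdist⟩ := Metric.mem_closure_iff.1 hb (ε * t) (by positivity)
  set z' : E := z + ((1-t)/t) • (b - b') with hz'def
  have hspan : coneOf D ⊆ (Submodule.span ℝ D : Set E) := by
    rintro w ⟨s, hs, d, hd, rfl⟩
    exact Submodule.smul_mem _ s (Submodule.subset_span hd)
  have hbspan : b ∈ Submodule.span ℝ D := by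
    have hcl : IsClosed ((Submodule.span ℝ D : Submodule ℝ E) : Set E) :=
      Submodule.closed_of_finiteDimensional _
    exact hcl.closure_subset ((closure_mono hspan) hb)
  have hb'span : b' ∈ Submodule.span ℝ D := hspan hb'
  have hz'aff : z' ∈ affineSpan ℝ D := by
    have hv : ((1-t)/t) • (b - b') ∈ (affineSpan ℝ D).direction :=
      span_le_direction h0 (Submodule.smul_mem _ _ (Submodule.sub_mem _ hbspan hb'span))
    have := AffineSubspace.vadd_mem_of_mem_direction hv (mem_affineSpan ℝ hzD)
    simpa [hz'def, add_comm] using this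
  have hz'dist : dist z' z < ε := by
    have h1 : dist z' z = |(1-t)/t| * dist b b' := by
      rw [hz'def, dist_eq_norm]
      simp only [add_sub_cancel_left, norm_smul, Real.norm_eq_abs, dist_eq_norm]
    rw [h1, abs_of_nonneg (div_nonneg (by linarith) ht.le)]
    have h2 : (1-t)/t * dist b b' ≤ (1-t)/t * (ε * t) :=
      mul_le_mul_of_nonneg_left (le_of_lt hdist) (div_nonneg (by linarith) ht.le)
    have h3 : (1-t)/t * (ε * t) = (1-t) * ε := by field_simp
    nlinarith [mul_pos ht hε]
  have hz'D : z' ∈ D := hball z' hz'aff hz'dist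
  have key : (1-t) • b + t • z = (1-t) • b' + t • z' := by
    have hkey : t • (((1-t)/t) • (b - b')) = (1-t) • (b - b') := by
      rw [smul_smul]
      congr 1
      field_simp
    rw [hz'def, smul_add, hkey, smul_sub]
    abel
  rw [key]
  have hz'cone : z' ∈ coneOf D := ⟨1, zero_le_one, z', hz'D, (one_smul ℝ z').symm⟩
  exact hcone hb' hz'cone (by linarith) (le_of_lt ht) (by ring)


def NC (D : Set E) : Set E := {v | ∀ d ∈ D, ⟪v, d⟫ ≤ 0}

lemma isClosed_NC (D : Set E) : IsClosed (NC D) := by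
  have : NC D = ⋂ d ∈ D, {v : E | ⟪v, d⟫ ≤ 0} := by
    ext v; simp [NC]
  rw [this]
  exact isClosed_biInter fun d _ =>
    isClosed_le (Continuous.inner continuous_id continuous_const) continuous_const

lemma zero_mem_NC (D : Set E) : (0:E) ∈ NC D := fun d _ => by simp

lemma add_mem_NC {D : Set E} {v w : E} (hv : v ∈ NC D) (hw : w ∈ NC D) : v + w ∈ NC D :=
  fun d hd => by rw [inner_add_left]; linarith [hv d hd, hw d hd]

lemma smul_mem_NC {D : Set E} {v : E} (hv : v ∈ NC D) {c : ℝ} (hc : 0 ≤ c) : c • v ∈ NC D :=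
  fun d hd => by
    rw [real_inner_smul_left]
    exact mul_nonpos_of_nonneg_of_nonpos hc (hv d hd)

lemma orthogonal_subset_NC {D : Set E} {q : E} (hq : q ∈ (Submodule.span ℝ D)ᗮ) : q ∈ NC D :=
  fun d hd => le_of_eq (by rw [real_inner_comm]; exact hq d (Submodule.subset_span hd))

section proj
variable [FiniteDimensional ℝ E]

lemma proj_mem_NC {D : Set E} {v : E} (hv : v ∈ NC D) :
    (↑(Submodule.orthogonalProjectionOnto (Submodule.span ℝ D) v) : E) ∈ NC D := by
  intro d hd
  set W := Submodule.span ℝ D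
  have horth : v - ↑(Submodule.orthogonalProjectionOnto W v) ∈ Wᗮ := Submodule.sub_starProjection_mem_orthogonal (K := W) v
  have h1 : ⟪d, v - ↑(Submodule.orthogonalProjectionOnto W v)⟫ = 0 := horth d (Submodule.subset_span hd)
  rw [inner_sub_right] at h1
  have h2 : ⟪(↑(Submodule.orthogonalProjectionOnto W v) : E), d⟫ = ⟪v, d⟫ := by
    have c1 := real_inner_comm d (↑(Submodule.orthogonalProjectionOnto W v) : E)
    have c2 := real_inner_comm d v
    linarith
  rw [h2]; exact hv d hd

lemma proj_norm_bound {D : Set E} (h0 : (0:E) ∈ D) {z : E} {ε : ℝ} (hε : 0 < ε) (hzD : z ∈ D)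
    (hball : ∀ y ∈ affineSpan ℝ D, dist y z < ε → y ∈ D)
    {v : E} (hv : v ∈ NC D) :
    ‖(↑(Submodule.orthogonalProjectionOnto (Submodule.span ℝ D) v) : E)‖ ≤ 2 / ε * (-⟪v, z⟫) := by
  set W := Submodule.span ℝ D
  set p : E := ↑(Submodule.orthogonalProjectionOnto W v)
  rcases eq_or_ne p 0 with hp | hp
  · rw [hp, norm_zero]
    have h := hv z hzD
    have h2 : (0:ℝ) < 2 / ε := by positivity
    nlinarith
  · set x : E := z + (ε / (2 * ‖p‖)) • p with hx
    have hxaff : x ∈ affineSpan ℝ D := by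
      have hpW : p ∈ W := (Submodule.orthogonalProjectionOnto W v).2
      have hv' : (ε / (2 * ‖p‖)) • p ∈ (affineSpan ℝ D).direction :=
        span_le_direction h0 (Submodule.smul_mem _ _ hpW)
      have := AffineSubspace.vadd_mem_of_mem_direction hv' (mem_affineSpan ℝ hzD)
      simpa [hx, add_comm] using this
    have hxdist : dist x z < ε := by
      rw [hx, dist_eq_norm, add_sub_cancel_left, norm_smul, Real.norm_eq_abs,
        abs_of_nonneg (div_nonneg hε.le (by positivity))]
      have hpn : 0 < ‖p‖ := norm_pos_iff.2 hp
      rw [div_mul_eq_mul_div, mul_comm]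
      rw [div_lt_iff₀ (by positivity)]
      nlinarith
    have hxD : x ∈ D := hball x hxaff hxdist
    have hvp : ⟪v, p⟫ = ‖p‖ ^ 2 := by
      have horth : v - p ∈ Wᗮ := Submodule.sub_starProjection_mem_orthogonal (K := W) v
      have hpW : p ∈ W := (Submodule.orthogonalProjectionOnto W v).2
      have h1 : ⟪p, v - p⟫ = 0 := horth p hpW
      have h2 : ⟪p, v⟫ = ⟪p, p⟫ + ⟪p, v - p⟫ := by
        rw [← inner_add_right]; congr 1; abel
      rw [real_inner_comm, h2, h1, add_zero, real_inner_self_eq_norm_sq]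
    have hineq := hv x hxD
    rw [hx, inner_add_right, real_inner_smul_right, hvp] at hineq
    have hpn : 0 < ‖p‖ := norm_pos_iff.2 hp
    have hd : ε / (2 * ‖p‖) * ‖p‖ ^ 2 = ε / 2 * ‖p‖ := by
      field_simp
    rw [hd] at hineq
    rw [div_mul_eq_mul_div, le_div_iff₀ hε]
    nlinarith



lemma closure_sum_NC_subset {m : ℕ} [NeZero m] (D : Fin m → Set E)
    (h0 : ∀ i, (0:E) ∈ D i) (z : E) (hzD : ∀ i, z ∈ D i)
    (ε : Fin m → ℝ) (hε : ∀ i, 0 < ε i)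
    (hball : ∀ i, ∀ y ∈ affineSpan ℝ (D i), dist y z < ε i → y ∈ D i) :
    closure (∑ i : Fin m, NC (D i)) ⊆ ∑ i : Fin m, NC (D i) := by
  intro zz hzz
  obtain ⟨x, hx, hlim⟩ := mem_closure_iff_seq_limit.1 hzz
  -- decompose each x k
  choose g hg hgsum using fun k => (Set.mem_fintype_sum _ (x k)).1 (hx k)
  -- bound on x
  obtain ⟨R, hR⟩ := (hlim.cauchySeq.isBounded_range).subset_closedBall 0
  have hxR : ∀ k, ‖x k‖ ≤ R := fun k => by
    have := hR (Set.mem_range_self k); rwa [Metric.mem_closedBall, dist_zero_right] at this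
  have hR0 : 0 ≤ R := le_trans (norm_nonneg _) (hxR 0)
  set B : ℝ := R * ‖z‖ with hB
  have hB0 : 0 ≤ B := mul_nonneg hR0 (norm_nonneg _)
  -- inner product bounds
  have hinner_nonpos : ∀ k i, ⟪g k i, z⟫ ≤ 0 := fun k i => hg k i z (hzD i)
  have hinner_lb : ∀ k i, -⟪g k i, z⟫ ≤ B := by
    intro k i
    have hsum : ∑ j, ⟪g k j, z⟫ = ⟪x k, z⟫ := by rw [← sum_inner, hgsum k]
    have h1 : ⟪x k, z⟫ - ⟪g k i, z⟫ ≤ 0 := by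
      rw [← hsum, ← Finset.add_sum_erase _ _ (Finset.mem_univ i), add_sub_cancel_left]
      exact Finset.sum_nonpos fun j _ => hinner_nonpos k j
    have h2 : -B ≤ ⟪x k, z⟫ := by
      have := abs_real_inner_le_norm (x k) z
      have h3 : ‖x k‖ * ‖z‖ ≤ B := mul_le_mul_of_nonneg_right (hxR k) (norm_nonneg _)
      rw [abs_le] at this
      linarith [this.1]
    linarith
  -- projections
  set W : Fin m → Submodule ℝ E := fun i => Submodule.span ℝ (D i) with hW
  set p : ℕ → Fin m → E := fun k i => ↑(Submodule.orthogonalProjectionOnto (W i) (g k i)) with hp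
  have hp_mem : ∀ k i, p k i ∈ NC (D i) := fun k i => proj_mem_NC (hg k i)
  have hp_bound : ∀ k i, ‖p k i‖ ≤ 2 / ε i * B := by
    intro k i
    refine le_trans (proj_norm_bound (h0 i) (hε i) (hzD i) (hball i) (hg k i)) ?_
    have : (0:ℝ) ≤ 2 / ε i := div_nonneg (by norm_num) (hε i).le
    exact mul_le_mul_of_nonneg_left (hinner_lb k i) this
  -- the summation map on the product of orthogonal complements
  set S : (∀ i : Fin m, ↥((W i)ᗮ)) →ₗ[ℝ] E :=
    { toFun := fun f => ∑ i, ((f i : E))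
      map_add' := by intros a b; simp [Finset.sum_add_distrib]
      map_smul' := by intros c a; simp [Finset.smul_sum] } with hS
  obtain ⟨σ, hσ⟩ := S.rangeRestrict.exists_rightInverse_of_surjective
    (LinearMap.range_eq_top.2 (LinearMap.surjective_rangeRestrict S))
  have hSσ : ∀ u : ↥(LinearMap.range S), S (σ u) = (u : E) := by
    intro u
    have := congrArg (fun f => ((f u : ↥(LinearMap.range S)) : E)) hσ
    simpa using this
  -- u k = residual
  have hu_mem : ∀ k, x k - ∑ i, p k i ∈ LinearMap.range S := by
    intro k
    refine ⟨fun i => ⟨g k i - p k i, Submodule.sub_starProjection_mem_orthogonal (K := W i) (g k i)⟩, ?_⟩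
    simp only [hS, LinearMap.coe_mk, AddHom.coe_mk]
    rw [← hgsum k, ← Finset.sum_sub_distrib]
  set u : ℕ → ↥(LinearMap.range S) := fun k => ⟨x k - ∑ i, p k i, hu_mem k⟩ with hu
  -- norm bound for σ
  set σc := LinearMap.toContinuousLinearMap σ with hσc
  have hσcoe : ∀ v, σc v = σ v := fun v => by rw [hσc, LinearMap.coe_toContinuousLinearMap']
  have hubound : ∀ k, ‖(u k : E)‖ ≤ R + ∑ i, 2 / ε i * B := by
    intro k
    have h1 : ‖x k - ∑ i, p k i‖ ≤ ‖x k‖ + ‖∑ i, p k i‖ := norm_sub_le _ _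
    have h2 : ‖∑ i, p k i‖ ≤ ∑ i, 2 / ε i * B :=
      le_trans (norm_sum_le _ _) (Finset.sum_le_sum fun i _ => hp_bound k i)
    calc ‖(u k : E)‖ = ‖x k - ∑ i, p k i‖ := rfl
      _ ≤ R + ∑ i, 2 / ε i * B := by linarith [hxR k]
  -- the adjusted decomposition
  set w : ℕ → Fin m → E := fun k i => p k i + ((σ (u k)) i : E) with hw'
  have hw_mem : ∀ k i, w k i ∈ NC (D i) :=
    fun k i => add_mem_NC (hp_mem k i) (orthogonal_subset_NC ((σ (u k)) i).2)
  have hw_sum : ∀ k, ∑ i, w k i = x k := by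
    intro k
    rw [hw']
    simp only []
    rw [Finset.sum_add_distrib]
    have : ∑ i, ((σ (u k)) i : E) = S (σ (u k)) := rfl
    rw [this, hSσ (u k)]
    show ∑ i, p k i + (x k - ∑ i, p k i) = x k
    abel
  -- uniform bound
  have hσnorm : ∀ k, ‖σ (u k)‖ ≤ ‖σc‖ * (R + ∑ i, 2 / ε i * B) := by
    intro k
    rw [← hσcoe]
    refine le_trans (σc.le_opNorm (u k)) ?_
    have : ‖u k‖ = ‖(u k : E)‖ := rfl
    rw [this]
    exact mul_le_mul_of_nonneg_left (hubound k) (norm_nonneg _)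
  set Rf : ℝ := (∑ i, 2 / ε i * B) + ‖σc‖ * (R + ∑ i, 2 / ε i * B) with hRf
  have hCnn : ∀ i : Fin m, (0:ℝ) ≤ 2 / ε i * B := fun i => by
    have : (0:ℝ) ≤ 2 / ε i := div_nonneg (by norm_num) (hε i).le
    exact mul_nonneg this hB0
  have hRf0 : 0 ≤ Rf := by
    have h1 : (0:ℝ) ≤ ∑ i, 2 / ε i * B := Finset.sum_nonneg fun i _ => hCnn i
    have h2 : (0:ℝ) ≤ ‖σc‖ * (R + ∑ i, 2 / ε i * B) :=
      mul_nonneg (ContinuousLinearMap.opNorm_nonneg σc) (by linarith)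
    rw [hRf]
    exact add_nonneg h1 h2
  have hwbound : ∀ k i, ‖w k i‖ ≤ Rf := by
    intro k i
    have h1 : ‖((σ (u k)) i : E)‖ ≤ ‖σ (u k)‖ := by
      have := norm_le_pi_norm (σ (u k)) i
      simpa using this
    have h2 : 2 / ε i * B ≤ ∑ j, 2 / ε j * B :=
      Finset.single_le_sum (fun j _ => hCnn j) (Finset.mem_univ i)
    calc ‖w k i‖ ≤ ‖p k i‖ + ‖((σ (u k)) i : E)‖ := norm_add_le _ _
      _ ≤ (2 / ε i * B) + ‖σ (u k)‖ := add_le_add (hp_bound k i) h1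
      _ ≤ (∑ j, 2 / ε j * B) + ‖σc‖ * (R + ∑ j, 2 / ε j * B) := add_le_add h2 (hσnorm k)
      _ = Rf := hRf.symm
  -- Bolzano-Weierstrass
  have hmem : ∀ k, (w k) ∈ Metric.closedBall (0 : Fin m → E) Rf := by
    intro k
    rw [Metric.mem_closedBall, dist_zero_right]
    exact (pi_norm_le_iff_of_nonneg hRf0).2 fun i => by simpa using hwbound k i
  obtain ⟨a, _, φ, hφ, hconv⟩ := tendsto_subseq_of_bounded Metric.isBounded_closedBall hmem
  have hcomp : ∀ i, Tendsto (fun k => w (φ k) i) atTop (nhds (a i)) :=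
    fun i => tendsto_pi_nhds.1 hconv i
  have ha_mem : ∀ i, a i ∈ NC (D i) := fun i =>
    (isClosed_NC (D i)).mem_of_tendsto (hcomp i) (Eventually.of_forall fun k => hw_mem (φ k) i)
  have ha_sum : ∑ i, a i = zz := by
    have h1 : Tendsto (fun k => ∑ i, w (φ k) i) atTop (nhds (∑ i, a i)) :=
      tendsto_finset_sum _ fun i _ => hcomp i
    have h2 : Tendsto (fun k => ∑ i, w (φ k) i) atTop (nhds zz) := by
      simp only [hw_sum]
      exact hlim.comp hφ.tendsto_atTop
    exact tendsto_nhds_unique h1 h2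
  rw [← ha_sum]
  exact Set.finset_sum_mem_finset_sum Finset.univ _ a fun i _ => ha_mem i

end proj

lemma single_mem_sum {m : ℕ} {S : Fin m → Set E} (h0 : ∀ j, (0:E) ∈ S j) {i : Fin m} {u : E}
    (hu : u ∈ S i) : u ∈ ∑ j : Fin m, S j := by
  classical
  have hmem : ∀ j : Fin m, (if j = i then u else 0) ∈ S j := by
    intro j
    by_cases h : j = i
    · subst h; simpa using hu
    · simpa [h] using h0 j
  have := Set.finset_sum_mem_finset_sum Finset.univ S (fun j => if j = i then u else 0)
    (fun j _ => hmem j)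
  simpa [Finset.sum_ite_eq'] using this

end NormalConeAux

/-- Normal cone intersection rule: if `⋂ i, ri(Ω i) ≠ ∅`, then
`N(x̄; ⋂ i, Ω i) = ∑ i, N(x̄; Ω i)`. -/
theorem stmt_8 (n m : ℕ) (hm : 2 ≤ m) (Ω : Fin m → Set (EuclideanSpace ℝ (Fin n)))
    (hconv : ∀ i, Convex ℝ (Ω i))
    (hqc : (⋂ i, intrinsicInterior ℝ (Ω i)).Nonempty)
    (xbar : EuclideanSpace ℝ (Fin n)) (hx : xbar ∈ ⋂ i, Ω i) :
    {v | ∀ x ∈ (⋂ i, Ω i), (inner ℝ v (x - xbar) : ℝ) ≤ 0} =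
      ∑ i : Fin m, {v | ∀ x ∈ Ω i, (inner ℝ v (x - xbar) : ℝ) ≤ 0} := by
  classical
  haveI : NeZero m := ⟨by omega⟩
  obtain ⟨a, ha⟩ := hqc
  rw [Set.mem_iInter] at ha
  rw [Set.mem_iInter] at hx
  set D : Fin m → Set (EuclideanSpace ℝ (Fin n)) := fun i => (fun x => x - xbar) '' Ω i with hD
  have hDconv : ∀ i, Convex ℝ (D i) := by
    intro i
    have : D i = (fun x => -xbar + x) '' Ω i := by
      ext w; simp [hD, sub_eq_neg_add]
    rw [this]
    exact (hconv i).translate (-xbar)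
  have h0 : ∀ i, (0:(EuclideanSpace ℝ (Fin n))) ∈ D i := fun i => ⟨xbar, hx i, sub_self xbar⟩
  -- the relative interior point
  set z : (EuclideanSpace ℝ (Fin n)) := a - xbar with hzdef
  have hz : ∀ i, z ∈ intrinsicInterior ℝ (D i) := by
    intro i
    set φ : (EuclideanSpace ℝ (Fin n)) ≃ᵃⁱ[ℝ] (EuclideanSpace ℝ (Fin n)) := AffineIsometryEquiv.constVAdd ℝ (EuclideanSpace ℝ (Fin n)) (-xbar) with hφ
    have hφeq : ∀ s : Set (EuclideanSpace ℝ (Fin n)), φ.toAffineIsometry '' s = (fun x => x - xbar) '' s := by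
      intro s
      apply Set.image_congr
      intro x _
      have h1 : φ.toAffineIsometry x = -xbar +ᵥ x := rfl
      rw [h1]
      show -xbar + x = x - xbar
      rw [sub_eq_neg_add]
    have := AffineIsometry.image_intrinsicInterior φ.toAffineIsometry (Ω i)
    rw [hφeq, hφeq] at this
    rw [show D i = (fun x => x - xbar) '' Ω i from rfl, this]
    exact ⟨a, ha i, rfl⟩
  choose ε hε1 hε2 hε3 using fun i => ri_ball (hz i)
  -- rewrite normal cones
  have hNCi : ∀ i, {v : (EuclideanSpace ℝ (Fin n)) | ∀ x ∈ Ω i, ⟪v, x - xbar⟫ ≤ 0} = NC (D i) := by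
    intro i
    ext v
    constructor
    · rintro h d ⟨x, hxi, rfl⟩
      exact h x hxi
    · intro h x hxi
      exact h (x - xbar) ⟨x, hxi, rfl⟩
  have hRHS : (∑ i : Fin m, {v : (EuclideanSpace ℝ (Fin n)) | ∀ x ∈ Ω i, ⟪v, x - xbar⟫ ≤ 0}) = ∑ i : Fin m, NC (D i) :=
    Finset.sum_congr rfl fun i _ => hNCi i
  rw [hRHS]
  ext v
  constructor
  · intro hv
    simp only [Set.mem_setOf_eq] at hv
    by_contra hvM
    -- the sum of normal cones as a convex cone
    set Mcone : ConvexCone ℝ (EuclideanSpace ℝ (Fin n)) :=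
      { carrier := ∑ i : Fin m, NC (D i)
        smul_mem' := by
          intro c hc w hw
          obtain ⟨f, hf, hfsum⟩ := (Set.mem_fintype_sum _ w).1 hw
          have : c • w = ∑ i, c • f i := by rw [← hfsum, Finset.smul_sum]
          rw [this]
          exact Set.finset_sum_mem_finset_sum Finset.univ _ _
            (fun i _ => smul_mem_NC (hf i) hc.le)
        add_mem' := by
          intro w₁ hw₁ w₂ hw₂
          obtain ⟨f, hf, hfsum⟩ := (Set.mem_fintype_sum _ w₁).1 hw₁
          obtain ⟨g, hg, hgsum⟩ := (Set.mem_fintype_sum _ w₂).1 hw₂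
          have : w₁ + w₂ = ∑ i, (f i + g i) := by
            rw [← hfsum, ← hgsum, Finset.sum_add_distrib]
          rw [this]
          exact Set.finset_sum_mem_finset_sum Finset.univ _ _
            (fun i _ => add_mem_NC (hf i) (hg i)) } with hMcone
    have hclosure_sub : closure (∑ i : Fin m, NC (D i)) ⊆ ∑ i : Fin m, NC (D i) :=
      closure_sum_NC_subset D h0 z (fun i => hε2 i) ε hε1 hε3
    have hvK : v ∉ Mcone.closure := by
      intro hvK
      exact hvM (hclosure_sub hvK)
    have hKne : ((Mcone.closure : ConvexCone ℝ (EuclideanSpace ℝ (Fin n))) : Set (EuclideanSpace ℝ (Fin n))).Nonempty := by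
      refine ⟨0, subset_closure ?_⟩
      exact single_mem_sum (fun j => zero_mem_NC (D j)) (zero_mem_NC (D 0))
    have hKclosed : IsClosed ((Mcone.closure : ConvexCone ℝ (EuclideanSpace ℝ (Fin n))) : Set (EuclideanSpace ℝ (Fin n))) := by
      rw [ConvexCone.coe_closure]
      exact isClosed_closure
    obtain ⟨y, hy1, hy2⟩ :=
      ProperCone.hyperplane_separation' (⟨Mcone.closure.toPointedCone (.of_nonempty_of_isClosed hKne hKclosed), hKclosed⟩ : ProperCone ℝ (EuclideanSpace ℝ (Fin n))) hvK
    -- y is nonnegative on each normal cone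
    have hyNi : ∀ i, ∀ u ∈ NC (D i), 0 ≤ ⟪u, y⟫ := by
      intro i u hu
      exact hy1 u (subset_closure (single_mem_sum (fun j => zero_mem_NC (D j)) hu))
    -- hence -y is in the closure of each cone
    have hyC : ∀ i, -y ∈ closure (coneOf (D i)) := by
      intro i
      by_contra hny
      set Ci : ConvexCone ℝ (EuclideanSpace ℝ (Fin n)) :=
        { carrier := coneOf (D i)
          smul_mem' := fun c hc w hw => smul_mem_coneOf hw hc.le
          add_mem' := by
            intro w₁ hw₁ w₂ hw₂
            have hmid : (1/2 : ℝ) • w₁ + (1/2 : ℝ) • w₂ ∈ coneOf (D i) :=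
              convex_coneOf (hDconv i) (h0 i) hw₁ hw₂ (by norm_num) (by norm_num) (by norm_num)
            have := smul_mem_coneOf hmid (by norm_num : (0:ℝ) ≤ 2)
            have h2 : (2:ℝ) • ((1/2 : ℝ) • w₁ + (1/2 : ℝ) • w₂) = w₁ + w₂ := by
              rw [smul_add, smul_smul, smul_smul]
              norm_num
            rwa [h2] at this }
      have hCine : ((Ci.closure : ConvexCone ℝ (EuclideanSpace ℝ (Fin n))) : Set (EuclideanSpace ℝ (Fin n))).Nonempty :=
        ⟨0, subset_closure ⟨0, le_refl _, 0, h0 i, by simp⟩⟩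
      have hCiclosed : IsClosed ((Ci.closure : ConvexCone ℝ (EuclideanSpace ℝ (Fin n))) : Set (EuclideanSpace ℝ (Fin n))) := by
        rw [ConvexCone.coe_closure]; exact isClosed_closure
      have hnyK : -y ∉ Ci.closure := hny
      obtain ⟨y', hy1', hy2'⟩ :=
        ProperCone.hyperplane_separation' (⟨Ci.closure.toPointedCone (.of_nonempty_of_isClosed hCine hCiclosed), hCiclosed⟩ : ProperCone ℝ (EuclideanSpace ℝ (Fin n))) hnyK
      have hy'N : -y' ∈ NC (D i) := by
        intro d hd
        have : 0 ≤ ⟪d, y'⟫ :=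
          hy1' d (subset_closure (subset_coneOf (D i) hd))
        rw [inner_neg_left, real_inner_comm]
        linarith
      have := hyNi i (-y') hy'N
      rw [inner_neg_left, real_inner_comm] at this
      rw [inner_neg_left] at hy2'
      have hcomm := real_inner_comm y y'
      linarith
    -- segment argument
    have hkey : ∀ t : ℝ, 0 < t → t ≤ 1 → ⟪v, (1-t) • (-y) + t • z⟫ ≤ 0 := by
      intro t ht ht1
      set c : (EuclideanSpace ℝ (Fin n)) := (1-t) • (-y) + t • z with hc
      have hcmem : ∀ i, c ∈ coneOf (D i) := fun i =>
        segment_mem_coneOf (hDconv i) (h0 i) (convex_coneOf (hDconv i) (h0 i)) (hε2 i)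
          ⟨ε i, hε1 i, hε3 i⟩ (hyC i) ht ht1
      choose δ hδ1 hδ2 using fun i => coneOf_shrink (hDconv i) (h0 i) (hcmem i)
      set lam : ℝ := Finset.univ.inf' ⟨0, Finset.mem_univ 0⟩ δ with hlam
      have hlam_pos : 0 < lam := (Finset.lt_inf'_iff _).2 fun i _ => hδ1 i
      have hlam_le : ∀ i, lam ≤ δ i := fun i => Finset.inf'_le _ (Finset.mem_univ i)
      have hmemD : ∀ i, lam • c ∈ D i := fun i => hδ2 i lam hlam_pos (hlam_le i)
      have hmemΩ : lam • c + xbar ∈ ⋂ i, Ω i := by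
        rw [Set.mem_iInter]
        intro i
        obtain ⟨ω, hω, heq⟩ := hmemD i
        have heq' : ω - xbar = lam • c := heq
        have heq2 : lam • c + xbar = ω := by rw [← heq']; abel
        rwa [heq2]
      have := hv (lam • c + xbar) hmemΩ
      rw [add_sub_cancel_right, real_inner_smul_right] at this
      nlinarith
    -- take t → 0
    set A : ℝ := ⟪v, -y⟫ with hA
    set C : ℝ := ⟪v, z⟫ with hC
    have hkey' : ∀ t : ℝ, 0 < t → t ≤ 1 → (1-t) * A + t * C ≤ 0 := by
      intro t ht ht1
      have := hkey t ht ht1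
      rwa [inner_add_right, real_inner_smul_right, real_inner_smul_right] at this
    have hApos : 0 < A := by
      rw [hA, inner_neg_right, real_inner_comm]
      linarith [real_inner_comm v y]
    set t0 : ℝ := min 1 (A / (2 * (|A - C| + 1))) with ht0
    have ht0pos : 0 < t0 := by
      apply lt_min one_pos
      positivity
    have ht0le : t0 ≤ 1 := min_le_left _ _
    have h := hkey' t0 ht0pos ht0le
    have h1 : t0 ≤ A / (2 * (|A - C| + 1)) := min_le_right _ _
    have h2 : A - C ≤ |A - C| := le_abs_self _
    have h3 : (0:ℝ) ≤ |A - C| := abs_nonneg _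
    have k1 : A ≤ t0 * (A - C) := by nlinarith [h]
    have k2 : t0 * (A - C) ≤ t0 * |A - C| := mul_le_mul_of_nonneg_left h2 ht0pos.le
    have k3 : t0 * |A - C| ≤ (A / (2 * (|A - C| + 1))) * |A - C| :=
      mul_le_mul_of_nonneg_right h1 h3
    have k4 : (A / (2 * (|A - C| + 1))) * |A - C| < A := by
      rw [div_mul_eq_mul_div, div_lt_iff₀ (by positivity)]
      nlinarith
    linarith
  · intro hv
    obtain ⟨f, hf, hfsum⟩ := (Set.mem_fintype_sum _ v).1 hv
    intro x hxmem
    show ⟪v, x - xbar⟫ ≤ 0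
    rw [← hfsum, sum_inner]
    refine Finset.sum_nonpos fun i _ => ?_
    exact hf i (x - xbar) ⟨x, Set.mem_iInter.1 hxmem i, rfl⟩
end

section
/- Let F : ℝⁿ ⇉ ℝᵐ be a convex set-valued mapping and φ : ℝᵐ → (-∞, ∞] a convex function, and define the optimal value function μ(x) = inf{φ(y) : y ∈ F(x)}, assumed to satisfy μ(x) > −∞ for all x. Then μ is convex. Moreover, if there exists x₀ ∈ ri(dom(F)) with ri(F(x₀)) ∩ ri(dom(φ)) ≠ ∅, then for any x̄ ∈ dom(μ) and any ȳ ∈ F(x̄) with μ(x̄) = φ(ȳ), one has ∂μ(x̄) = ⋃_{v ∈ ∂φ(ȳ)} D*F(x̄, ȳ)(v). -/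
open Set Pointwise

noncomputable section

/-- The optimal value function `μ(x) = inf {φ(y) : y ∈ F x}`. -/
def optVal {n m : ℕ} (F : EuclideanSpace ℝ (Fin n) → Set (EuclideanSpace ℝ (Fin m)))
    (φ : EuclideanSpace ℝ (Fin m) → EReal) (x : EuclideanSpace ℝ (Fin n)) : EReal :=
  ⨅ y ∈ F x, φ y

section aux
variable {G : Type*} [NormedAddCommGroup G] [NormedSpace ℝ G]

/-- Prolongation: a segment from any point of `s` to an intrinsic interior point of `s`
can be extended a little beyond, staying inside `s`. -/
lemma exists_forward {s : Set G} {x z : G} (hx : x ∈ intrinsicInterior ℝ s) (hz : z ∈ s) :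
    ∃ ε : ℝ, 0 < ε ∧ x + ε • (x - z) ∈ s := by
  rw [mem_intrinsicInterior] at hx
  obtain ⟨y, hy, rfl⟩ := hx
  have hzspan : z ∈ affineSpan ℝ s := subset_affineSpan ℝ s hz
  have hmem : ∀ ε : ℝ, (y : G) + ε • ((y : G) - z) ∈ affineSpan ℝ s := by
    intro ε
    have hdir : (y : G) - z ∈ (affineSpan ℝ s).direction :=
      AffineSubspace.vsub_mem_direction y.2 hzspan
    have : ε • ((y : G) - z) +ᵥ (y : G) ∈ affineSpan ℝ s :=
      AffineSubspace.vadd_mem_of_mem_direction (Submodule.smul_mem _ _ hdir) y.2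
    simpa [vadd_eq_add, add_comm] using this
  set c : ℝ → affineSpan ℝ s := fun ε => ⟨(y : G) + ε • ((y : G) - z), hmem ε⟩ with hc
  have hcont : Continuous c := by
    apply Continuous.subtype_mk
    continuity
  have hc0 : c 0 = y := by
    apply Subtype.ext
    simp [hc]
  have : c ⁻¹' (interior ((↑) ⁻¹' s : Set (affineSpan ℝ s))) ∈ nhds (0 : ℝ) := by
    apply hcont.continuousAt.preimage_mem_nhds
    rw [hc0]
    exact isOpen_interior.mem_nhds hy
  obtain ⟨δ, hδpos, hδ⟩ := Metric.mem_nhds_iff.1 this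
  refine ⟨δ/2, by positivity, ?_⟩
  have : c (δ/2) ∈ interior ((↑) ⁻¹' s : Set (affineSpan ℝ s)) := by
    apply hδ
    simp only [Metric.mem_ball, Real.dist_eq, sub_zero]
    rw [abs_of_pos (by positivity)]
    linarith
  have h2 := interior_subset this
  simpa [hc] using h2

lemma combo_coeff {ε : ℝ} (hε : 0 < ε) : 0 < ε / (1 + ε) ∧ ε / (1 + ε) < 1 := by
  constructor
  · positivity
  · rw [div_lt_one (by linarith)]; linarith

lemma combo_eq_pt (x z : G) {ε : ℝ} (hε : 0 < ε) :
    (ε / (1 + ε)) • z + (1 - ε / (1 + ε)) • (x + ε • (x - z)) = x := by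
  have h1 : (1 : ℝ) + ε ≠ 0 := by linarith
  match_scalars <;> field_simp <;> ring

/-- A linear functional attaining its max over `s` at an intrinsic interior point is constant. -/
lemma const_of_max (f : G →L[ℝ] ℝ) {s : Set G} {x : G} (hx : x ∈ intrinsicInterior ℝ s)
    (h : ∀ z ∈ s, f z ≤ f x) : ∀ z ∈ s, f z = f x := by
  intro z hz
  obtain ⟨ε, hε, hmem⟩ := exists_forward hx hz
  have h' := h _ hmem
  have : f (x + ε • (x - z)) = f x + ε * (f x - f z) := by
    simp [map_add, map_smul, map_sub, smul_eq_mul]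
  rw [this] at h'
  have hfz : f x ≤ f z := by nlinarith
  exact le_antisymm (h z hz) hfz

lemma combo_sub (a b : ℝ) (hab : a + b = 1) (w₁ w₂ z : G) :
    a • w₁ + b • w₂ - z = a • (w₁ - z) + b • (w₂ - z) := by
  match_scalars <;> linarith

lemma combo_add (a b : ℝ) (hab : a + b = 1) (w₁ w₂ z : G) :
    a • (w₁ + z) + b • (w₂ + z) = a • w₁ + b • w₂ + z := by
  match_scalars <;> linarith

end aux

lemma sep {G : Type*} [NormedAddCommGroup G] [NormedSpace ℝ G] [FiniteDimensional ℝ G]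
    {K : Set G} (hK : Convex ℝ K) (hne : K.Nonempty) (h0 : (0:G) ∉ K) :
    ∃ f : G →L[ℝ] ℝ, (∀ k ∈ K, f k ≤ 0) ∧ ∃ k ∈ K, f k < 0 := by
  by_cases hcl : (0:G) ∈ closure K
  · set M := affineSpan ℝ K with hM
    have hMne : Nonempty M := by
      obtain ⟨k, hk⟩ := hne
      exact ⟨⟨k, subset_affineSpan ℝ K hk⟩⟩
    have hMclosed : IsClosed (M : Set G) := M.closed_of_finiteDimensional
    have h0M : (0:G) ∈ M := by
      have h1 : closure K ⊆ closure (M : Set G) := closure_mono (subset_affineSpan ℝ K)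
      rw [hMclosed.closure_eq] at h1
      exact h1 hcl
    set V := M.direction with hV
    have hKV : ∀ k ∈ K, k ∈ V := by
      intro k hk
      have := AffineSubspace.vsub_mem_direction (subset_affineSpan ℝ K hk) h0M
      simpa using this
    set K' : Set V := (Subtype.val) ⁻¹' K with hK'
    have hK'conv : Convex ℝ K' := hK.linear_preimage V.subtype
    have hspan : affineSpan ℝ K' = ⊤ := by
      rw [eq_top_iff]
      intro p _
      have hpM : (p : G) ∈ M := by
        have := AffineSubspace.vadd_mem_of_mem_direction p.2 h0M
        simpa using this
      have himg : Subtype.val '' K' = K := by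
        apply Subset.antisymm
        · rintro _ ⟨q, hq, rfl⟩; exact hq
        · intro k hk; exact ⟨⟨k, hKV k hk⟩, hk, rfl⟩
      have hmap : (affineSpan ℝ K').map (V.subtype.toAffineMap) = M := by
        rw [AffineSubspace.map_span]
        have hcoe : ⇑V.subtype.toAffineMap '' K' = Subtype.val '' K' := rfl
        rw [hcoe, himg]
      rw [← hmap] at hpM
      obtain ⟨q, hq, hq2⟩ := hpM
      have : q = p := Subtype.ext hq2
      rwa [this] at hq
    obtain ⟨y₀, hy₀⟩ : (interior K').Nonempty := by
      rw [hK'conv.interior_nonempty_iff_affineSpan_eq_top]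
      exact hspan
    have h0K' : (0 : V) ∉ interior K' := by
      intro h
      apply h0
      have h2 := interior_subset h
      exact h2
    obtain ⟨f, hf⟩ := geometric_hahn_banach_open_point hK'conv.interior isOpen_interior h0K'
    have hf0 : f 0 = 0 := map_zero f
    rw [hf0] at hf
    obtain ⟨g, hg, -⟩ := exists_extension_norm_eq V f
    have key : ∀ k ∈ K, g k ≤ 0 := by
      intro k hk
      have hkV : k ∈ V := hKV k hk
      have hgk : g k = f ⟨k, hkV⟩ := hg ⟨k, hkV⟩
      rw [hgk]
      set k' : V := ⟨k, hkV⟩ with hk'def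
      have hk'K : k' ∈ K' := hk
      by_contra hpos
      push_neg at hpos
      have hy0neg : f y₀ < 0 := hf y₀ hy₀
      have hd : 0 < f k' - f y₀ := by linarith
      set t := f k' / (2 * (f k' - f y₀)) with ht
      have ht0 : 0 < t := by positivity
      have ht1 : t ≤ 1/2 := by
        rw [ht, div_le_div_iff₀ (by linarith) (by norm_num)]
        nlinarith
      have hmem : t • y₀ + (1 - t) • k' ∈ interior K' :=
        hK'conv.combo_interior_closure_mem_interior hy₀ (subset_closure hk'K)
          ht0 (by linarith) (by ring)
      have := hf _ hmem
      rw [map_add, map_smul, map_smul] at this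
      simp only [smul_eq_mul] at this
      have htval : t * (f k' - f y₀) = f k' / 2 := by
        rw [ht]; field_simp
      nlinarith
    have hy₀K' : y₀ ∈ K' := interior_subset hy₀
    refine ⟨g, key, ⟨(y₀ : G), hy₀K', ?_⟩⟩
    have : g (y₀ : G) = f y₀ := hg y₀
    rw [this]
    exact hf y₀ hy₀
  · obtain ⟨f, u, hu, hb⟩ := geometric_hahn_banach_point_closed hK.closure isClosed_closure hcl
    rw [map_zero] at hu
    refine ⟨-f, ?_, ?_⟩
    · intro k hk
      have := hb k (subset_closure hk)
      simp only [ContinuousLinearMap.neg_apply]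
      linarith
    · obtain ⟨k, hk⟩ := hne
      refine ⟨k, hk, ?_⟩
      have := hb k (subset_closure hk)
      simp only [ContinuousLinearMap.neg_apply]
      linarith

lemma ereal_le_coe_of_forall {x : EReal} {r : ℝ} (h : ∀ ε : ℝ, 0 < ε → x ≤ ((r + ε : ℝ) : EReal)) :
    x ≤ (r : EReal) := by
  by_contra hlt
  push_neg at hlt
  obtain ⟨s, hs1, hs2⟩ := EReal.lt_iff_exists_real_btwn.1 hlt
  have hε : (0:ℝ) < s - r := by
    have := EReal.coe_lt_coe_iff.1 hs1
    linarith
  have := h (s - r) hε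
  rw [show r + (s - r) = s from by ring] at this
  exact absurd (lt_of_le_of_lt this hs2) (lt_irrefl _)

lemma nonpos_of_forall_le_mul {X M : ℝ} (hM : 0 < M) (h : ∀ δ : ℝ, 0 < δ → X ≤ δ * M) : X ≤ 0 := by
  by_contra hX
  push_neg at hX
  have hδ : (0:ℝ) < X / (2 * M) := by positivity
  have := h _ hδ
  rw [div_mul_eq_mul_div, mul_comm] at this
  have h2 : M * X / (2 * M) = X / 2 := by field_simp
  rw [h2] at this
  linarith
set_option maxHeartbeats 1000000 in
/-- Convexity of the optimal value function and the exact formula for its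
subdifferential under the relative interior qualification condition. -/
theorem stmt_11 (n m : ℕ) (F : EuclideanSpace ℝ (Fin n) → Set (EuclideanSpace ℝ (Fin m)))
    (hF : Convex ℝ {p : EuclideanSpace ℝ (Fin n) × EuclideanSpace ℝ (Fin m) | p.2 ∈ F p.1})
    (φ : EuclideanSpace ℝ (Fin m) → EReal) (hφbot : ∀ y, φ y ≠ ⊥)
    (hφconv : Convex ℝ {q : EuclideanSpace ℝ (Fin m) × ℝ | φ q.1 ≤ (q.2 : EReal)})
    (hμbot : ∀ x, optVal F φ x ≠ ⊥) :
    Convex ℝ {p : EuclideanSpace ℝ (Fin n) × ℝ | optVal F φ p.1 ≤ (p.2 : EReal)} ∧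
    ((∃ x₀ ∈ intrinsicInterior ℝ {x | (F x).Nonempty},
        (intrinsicInterior ℝ (F x₀) ∩ intrinsicInterior ℝ {y | φ y < ⊤}).Nonempty) →
      ∀ xbar, optVal F φ xbar < ⊤ → ∀ ybar ∈ F xbar, φ ybar = optVal F φ xbar →
        {u | ∀ x, ((inner ℝ u (x - xbar) : ℝ) : EReal) ≤ optVal F φ x - optVal F φ xbar} =
          ⋃ v ∈ {v' | ∀ y, ((inner ℝ v' (y - ybar) : ℝ) : EReal) ≤ φ y - φ ybar},
            {u | ∀ p : EuclideanSpace ℝ (Fin n) × EuclideanSpace ℝ (Fin m), p.2 ∈ F p.1 →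
              (inner ℝ u (p.1 - xbar) : ℝ) + (inner ℝ (-v) (p.2 - ybar) : ℝ) ≤ 0}) := by
  have hbasicle : ∀ x, ∀ y ∈ F x, optVal F φ x ≤ φ y := fun x y hy => iInf₂_le y hy
  constructor
  · -- Convexity of the epigraph of the optimal value function
    rintro p hp q hq a b ha hb hab
    simp only [mem_setOf_eq] at hp hq ⊢
    rcases eq_or_lt_of_le ha with rfl | ha'
    · have hb1 : b = 1 := by linarith
      subst hb1
      simpa using hq
    rcases eq_or_lt_of_le hb with rfl | hb'
    · have ha1 : a = 1 := by linarith
      subst ha1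
      simpa using hp
    -- both coefficients positive
    apply ereal_le_coe_of_forall
    intro ε hε
    have hplt : optVal F φ p.1 < ((p.2 + ε : ℝ) : EReal) :=
      lt_of_le_of_lt hp (by exact_mod_cast EReal.coe_lt_coe_iff.2 (by linarith))
    have hqlt : optVal F φ q.1 < ((q.2 + ε : ℝ) : EReal) :=
      lt_of_le_of_lt hq (by exact_mod_cast EReal.coe_lt_coe_iff.2 (by linarith))
    rw [optVal] at hplt hqlt
    simp only [iInf_lt_iff] at hplt hqlt
    obtain ⟨y₁, hy₁F, hy₁⟩ := hplt
    obtain ⟨y₂, hy₂F, hy₂⟩ := hqlt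
    have hmem₁ : ((y₁, p.2 + ε) : EuclideanSpace ℝ (Fin m) × ℝ) ∈
        {q : EuclideanSpace ℝ (Fin m) × ℝ | φ q.1 ≤ (q.2 : EReal)} := le_of_lt hy₁
    have hmem₂ : ((y₂, q.2 + ε) : EuclideanSpace ℝ (Fin m) × ℝ) ∈
        {q : EuclideanSpace ℝ (Fin m) × ℝ | φ q.1 ≤ (q.2 : EReal)} := le_of_lt hy₂
    have hcomb := hφconv hmem₁ hmem₂ ha hb hab
    simp only [mem_setOf_eq, Prod.fst_add, Prod.snd_add, Prod.smul_fst, Prod.smul_snd,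
      smul_eq_mul] at hcomb
    have hgr₁ : ((p.1, y₁) : EuclideanSpace ℝ (Fin n) × EuclideanSpace ℝ (Fin m)) ∈
        {p : EuclideanSpace ℝ (Fin n) × EuclideanSpace ℝ (Fin m) | p.2 ∈ F p.1} := hy₁F
    have hgr₂ : ((q.1, y₂) : EuclideanSpace ℝ (Fin n) × EuclideanSpace ℝ (Fin m)) ∈
        {p : EuclideanSpace ℝ (Fin n) × EuclideanSpace ℝ (Fin m) | p.2 ∈ F p.1} := hy₂F
    have hgr := hF hgr₁ hgr₂ ha hb hab
    simp only [mem_setOf_eq, Prod.fst_add, Prod.snd_add, Prod.smul_fst, Prod.smul_snd] at hgr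
    have h1 : optVal F φ (a • p + b • q).1 ≤ φ (a • y₁ + b • y₂) := by
      have : (a • p + b • q).1 = a • p.1 + b • q.1 := rfl
      rw [this]
      exact hbasicle _ _ hgr
    have h2 : (a • p + b • q).2 = a * p.2 + b * q.2 := rfl
    rw [h2]
    refine le_trans h1 (le_trans hcomb ?_)
    have : a * (p.2 + ε) + b * (q.2 + ε) = a * p.2 + b * q.2 + ε := by
      have : a * ε + b * ε = ε := by
        rw [← add_mul, hab, one_mul]
      ring_nf
      nlinarith [this]
    rw [this]
  · intro hqc xbar hxtop ybar hybarF hphiybar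
    have hμxb := hμbot xbar
    set c := (optVal F φ xbar).toReal with hcdef
    have hc : optVal F φ xbar = (c : EReal) := (EReal.coe_toReal hxtop.ne hμxb).symm
    have hφyb : φ ybar = (c : EReal) := by rw [hphiybar, hc]
    ext u
    simp only [mem_setOf_eq, mem_iUnion, exists_prop]
    constructor
    · -- hard direction
      intro hu
      have hbasic : ∀ x y, y ∈ F x → φ y ≠ ⊤ →
          (inner ℝ u (x - xbar) : ℝ) + c ≤ (φ y).toReal := by
        intro x y hy hyt
        have h1 := hu x
        rw [hc] at h1
        have h2 : optVal F φ x ≤ φ y := hbasicle x y hy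
        have h3 : ((inner ℝ u (x - xbar) : ℝ) : EReal) ≤ φ y - (c : EReal) :=
          le_trans h1 (EReal.sub_le_sub h2 le_rfl)
        rw [← EReal.coe_toReal hyt (hφbot y), ← EReal.coe_sub] at h3
        have := EReal.coe_le_coe_iff.1 h3
        linarith
      set A : Set ((EuclideanSpace ℝ (Fin m)) × ℝ) :=
        {p | φ (p.1 + ybar) ≤ ((p.2 + c : ℝ) : EReal)} with hA
      set B : Set ((EuclideanSpace ℝ (Fin m)) × ℝ) :=
        {p | ∃ x, p.1 + ybar ∈ F x ∧ p.2 < (inner ℝ u (x - xbar) : ℝ)} with hB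
      have hAconv : Convex ℝ A := by
        rintro p hp q hq a b ha hb hab
        simp only [hA, mem_setOf_eq] at hp hq ⊢
        have hm1 : ((p.1 + ybar, p.2 + c) : EuclideanSpace ℝ (Fin m) × ℝ) ∈
            {q : EuclideanSpace ℝ (Fin m) × ℝ | φ q.1 ≤ (q.2 : EReal)} := hp
        have hm2 : ((q.1 + ybar, q.2 + c) : EuclideanSpace ℝ (Fin m) × ℝ) ∈
            {q : EuclideanSpace ℝ (Fin m) × ℝ | φ q.1 ≤ (q.2 : EReal)} := hq
        have hcomb := hφconv hm1 hm2 ha hb hab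
        simp only [mem_setOf_eq, Prod.fst_add, Prod.snd_add, Prod.smul_fst, Prod.smul_snd,
          smul_eq_mul] at hcomb
        rw [combo_add a b hab p.1 q.1 ybar] at hcomb
        have e1 : (a • p + b • q).1 = a • p.1 + b • q.1 := rfl
        have e2 : (a • p + b • q).2 = a * p.2 + b * q.2 := rfl
        rw [e1, e2]
        have e3 : a * (p.2 + c) + b * (q.2 + c) = a * p.2 + b * q.2 + c := by
          linear_combination c * hab
        rw [e3] at hcomb
        exact hcomb
      have hBconv : Convex ℝ B := by
        rintro p hp q hq a b ha hb hab
        rcases eq_or_lt_of_le ha with rfl | ha'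
        · have hb1 : b = 1 := by linarith
          subst hb1
          simpa using hq
        rcases eq_or_lt_of_le hb with rfl | hb'
        · have ha1 : a = 1 := by linarith
          subst ha1
          simpa using hp
        simp only [hB, mem_setOf_eq] at hp hq ⊢
        obtain ⟨xp, hxpF, hxp⟩ := hp
        obtain ⟨xq, hxqF, hxq⟩ := hq
        refine ⟨a • xp + b • xq, ?_, ?_⟩
        · have hgr1 : ((xp, p.1 + ybar) : _ × _) ∈
              {r : EuclideanSpace ℝ (Fin n) × EuclideanSpace ℝ (Fin m) | r.2 ∈ F r.1} := hxpF
          have hgr2 : ((xq, q.1 + ybar) : _ × _) ∈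
              {r : EuclideanSpace ℝ (Fin n) × EuclideanSpace ℝ (Fin m) | r.2 ∈ F r.1} := hxqF
          have hgr := hF hgr1 hgr2 ha hb hab
          simp only [mem_setOf_eq, Prod.fst_add, Prod.snd_add, Prod.smul_fst,
            Prod.smul_snd] at hgr
          rw [combo_add a b hab p.1 q.1 ybar] at hgr
          have e1 : (a • p + b • q).1 = a • p.1 + b • q.1 := rfl
          rw [e1]
          exact hgr
        · have e2 : (a • p + b • q).2 = a * p.2 + b * q.2 := rfl
          rw [e2]
          have hinner : (inner ℝ u (a • xp + b • xq - xbar) : ℝ) =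
              a * (inner ℝ u (xp - xbar) : ℝ) + b * (inner ℝ u (xq - xbar) : ℝ) := by
            rw [show a • xp + b • xq - xbar = a • (xp - xbar) + b • (xq - xbar) from
              combo_sub a b hab xp xq xbar]
            rw [inner_add_right]
            rw [real_inner_smul_right, real_inner_smul_right]
          rw [hinner]
          have := mul_lt_mul_of_pos_left hxp ha'
          have := mul_lt_mul_of_pos_left hxq hb'
          linarith
      have hA00 : ((0, 0) : EuclideanSpace ℝ (Fin m) × ℝ) ∈ A := by
        simp only [hA, mem_setOf_eq, zero_add, hφyb]
        exact le_refl _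
      have hB0 : ∀ s : ℝ, s < 0 → (((0 : EuclideanSpace ℝ (Fin m)), s)) ∈ B := by
        intro s hs
        refine ⟨xbar, by simpa using hybarF, ?_⟩
        simp only [sub_self, inner_zero_right]
        exact hs
      set K := A - B with hK
      have h0K : ((0 : EuclideanSpace ℝ (Fin m) × ℝ)) ∉ K := by
        intro h
        rw [hK, Set.mem_sub] at h
        obtain ⟨p, hpA, q, hqB, hpq⟩ := h
        have hpq' : p = q := by rwa [sub_eq_zero] at hpq
        subst hpq'
        obtain ⟨x, hxF, hxlt⟩ := hqB
        have hφp : φ (p.1 + ybar) ≤ ((p.2 + c : ℝ) : EReal) := hpA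
        have hnt : φ (p.1 + ybar) ≠ ⊤ := ne_top_of_le_ne_top (EReal.coe_ne_top _) hφp
        have hb1 := hbasic x (p.1 + ybar) hxF hnt
        have h2 : (φ (p.1 + ybar)).toReal ≤ p.2 + c := by
          rw [← EReal.coe_le_coe_iff, EReal.coe_toReal hnt (hφbot _)]
          exact hφp
        linarith
      have hKconv : Convex ℝ K := hAconv.sub hBconv
      have hKne : K.Nonempty :=
        ⟨(0, 0) - (0, -1), Set.sub_mem_sub hA00 (hB0 (-1) (by norm_num))⟩
      obtain ⟨f, hfle, k₀, hk₀, hfk₀⟩ := sep hKconv hKne h0K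
      have hsep : ∀ a ∈ A, ∀ b ∈ B, f a ≤ f b := by
        intro a ha' b hb'
        have := hfle _ (Set.sub_mem_sub ha' hb')
        rw [map_sub] at this
        linarith
      have hstrict : ∃ a ∈ A, ∃ b ∈ B, f a < f b := by
        rw [hK, Set.mem_sub] at hk₀
        obtain ⟨p, hp, q, hq, hpq⟩ := hk₀
        refine ⟨p, hp, q, hq, ?_⟩
        rw [← hpq, map_sub] at hfk₀
        linarith
      set g := f.comp (ContinuousLinearMap.inl ℝ (EuclideanSpace ℝ (Fin m)) ℝ) with hgdef
      set β := f (0, 1) with hβdef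
      have hgapp : ∀ w : EuclideanSpace ℝ (Fin m), g w = f (w, 0) := by
        intro w
        simp [hgdef]
      have hsplit : ∀ p : EuclideanSpace ℝ (Fin m) × ℝ, f p = g p.1 + p.2 * β := by
        intro p
        have hp : p = ((p.1, 0) : EuclideanSpace ℝ (Fin m) × ℝ)
            + p.2 • ((0 : EuclideanSpace ℝ (Fin m)), (1 : ℝ)) := by
          simp [Prod.ext_iff]
        calc f p = f ((p.1, 0) + p.2 • ((0 : EuclideanSpace ℝ (Fin m)), (1:ℝ))) := by rw [← hp]
          _ = f (p.1, 0) + p.2 * f (0, 1) := by rw [map_add, map_smul, smul_eq_mul]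
          _ = g p.1 + p.2 * β := by rw [hgapp, hβdef]
      have hg0 : g 0 = 0 := map_zero g
      have hβle : β ≤ 0 := by
        have := hsep _ hA00 _ (hB0 (-1) (by norm_num))
        rw [hsplit, hsplit] at this
        simp only [hg0] at this
        linarith
      by_cases hβ0 : β = 0
      · -- vertical separator: contradiction with the qualification condition
        exfalso
        obtain ⟨x₀, hx₀, yh, hyhF, hyhφ⟩ := hqc
        have hyhFx₀ : yh ∈ F x₀ := intrinsicInterior_subset hyhF
        have hyhdom' : yh ∈ {y | φ y < ⊤} := intrinsicInterior_subset hyhφ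
        have hyhdom : φ yh < ⊤ := hyhdom'
        have hga : ∀ y, φ y ≠ ⊤ → ∀ x, ∀ y' ∈ F x, g (y - ybar) ≤ g (y' - ybar) := by
          intro y hy x y' hy'
          have haA : ((y - ybar, (φ y).toReal - c) : EuclideanSpace ℝ (Fin m) × ℝ) ∈ A := by
            simp only [hA, mem_setOf_eq]
            rw [sub_add_cancel, show (φ y).toReal - c + c = (φ y).toReal from by ring,
              EReal.coe_toReal hy (hφbot y)]
          have hbB : ((y' - ybar, (inner ℝ u (x - xbar) : ℝ) - 1) :
              EuclideanSpace ℝ (Fin m) × ℝ) ∈ B := by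
            refine ⟨x, by rw [sub_add_cancel]; exact hy', ?_⟩
            show (inner ℝ u (x - xbar) : ℝ) - 1 < (inner ℝ u (x - xbar) : ℝ)
            linarith
          have := hsep _ haA _ hbB
          rw [hsplit, hsplit, hβ0] at this
          simpa using this
        have hgmax : ∀ z ∈ {y | φ y < ⊤}, g z ≤ g yh := by
          intro z hz
          have := hga z (LT.lt.ne hz) x₀ yh hyhFx₀
          rw [map_sub, map_sub] at this
          linarith
        have hφconst := const_of_max g hyhφ hgmax
        have hgmin : ∀ z ∈ F x₀, (-g) z ≤ (-g) yh := by
          intro z hz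
          have := hga yh hyhdom.ne x₀ z hz
          rw [map_sub, map_sub] at this
          simp only [ContinuousLinearMap.neg_apply]
          linarith
        have hFx₀const := const_of_max (-g) hyhF hgmin
        have hImconst : ∀ x, ∀ y ∈ F x, g y = g yh := by
          intro x y hy
          have hxdom : x ∈ {x | (F x).Nonempty} := ⟨y, hy⟩
          obtain ⟨ε, hε, hx''⟩ := exists_forward hx₀ hxdom
          obtain ⟨y'', hy''⟩ := hx''
          obtain ⟨hθ0, hθ1⟩ := combo_coeff hε
          have hgr1 : ((x, y) : _ × _) ∈
              {p : EuclideanSpace ℝ (Fin n) × EuclideanSpace ℝ (Fin m) | p.2 ∈ F p.1} := hy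
          have hgr2 : ((x₀ + ε • (x₀ - x), y'') : _ × _) ∈
              {p : EuclideanSpace ℝ (Fin n) × EuclideanSpace ℝ (Fin m) | p.2 ∈ F p.1} := hy''
          have h1le : (0:ℝ) ≤ 1 - ε / (1 + ε) := by linarith
          have hsum : ε / (1 + ε) + (1 - ε / (1 + ε)) = 1 := by ring
          have hcomb := hF hgr1 hgr2 hθ0.le h1le hsum
          simp only [mem_setOf_eq, Prod.fst_add, Prod.snd_add, Prod.smul_fst,
            Prod.smul_snd] at hcomb
          rw [combo_eq_pt x₀ x hε] at hcomb
          have h1 := hFx₀const _ hcomb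
          simp only [ContinuousLinearMap.neg_apply, neg_inj] at h1
          rw [map_add, map_smul, map_smul] at h1
          simp only [smul_eq_mul] at h1
          have h3 : g yh ≤ g y := by
            have := hga yh hyhdom.ne x y hy
            rw [map_sub, map_sub] at this
            linarith
          have h4 : g yh ≤ g y'' := by
            have := hga yh hyhdom.ne _ y'' hy''
            rw [map_sub, map_sub] at this
            linarith
          nlinarith
        obtain ⟨a, haA, b, hbB, hlt⟩ := hstrict
        rw [hsplit a, hsplit b, hβ0] at hlt
        simp only [mul_zero, add_zero] at hlt
        have hat : φ (a.1 + ybar) ≠ ⊤ := by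
          have : φ (a.1 + ybar) ≤ ((a.2 + c : ℝ) : EReal) := haA
          exact ne_top_of_le_ne_top (EReal.coe_ne_top _) this
        have hga1 : g (a.1 + ybar) = g yh := hφconst _ (lt_top_iff_ne_top.2 hat)
        obtain ⟨xb, hxbF, -⟩ := hbB
        have hgb1 : g (b.1 + ybar) = g yh := hImconst xb _ hxbF
        rw [map_add] at hga1 hgb1
        linarith
      · -- non-vertical separator: produce the subgradient v
        have hβneg : β < 0 := lt_of_le_of_ne hβle hβ0
        set v := (InnerProductSpace.toDual ℝ (EuclideanSpace ℝ (Fin m))).symm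
          ((-β⁻¹) • g) with hv
        have hvinner : ∀ w, (inner ℝ v w : ℝ) = -β⁻¹ * g w := by
          intro w
          rw [hv, InnerProductSpace.toDual_symm_apply]
          simp [smul_eq_mul]
        have hginner : ∀ w, g w = -β * (inner ℝ v w : ℝ) := by
          intro w
          rw [hvinner w]
          field_simp
        refine ⟨v, ?_, ?_⟩
        · intro y
          by_cases hyt : φ y = ⊤
          · rw [hyt, hφyb, EReal.top_sub_coe]
            exact le_top
          · have hρ : φ y = (((φ y).toReal : ℝ) : EReal) := (EReal.coe_toReal hyt (hφbot y)).symm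
            set ρ := (φ y).toReal with hρdef
            have haA : ((y - ybar, ρ - c) : EuclideanSpace ℝ (Fin m) × ℝ) ∈ A := by
              simp only [hA, mem_setOf_eq]
              rw [sub_add_cancel, show ρ - c + c = ρ from by ring]
              rw [hρ]
            have hkey : ∀ δ : ℝ, 0 < δ → g (y - ybar) + (ρ - c) * β ≤ δ * (-β) := by
              intro δ hδ
              have := hsep _ haA _ (hB0 (-δ) (by linarith))
              rw [hsplit, hsplit] at this
              simp only [hg0] at this
              linarith
            have h0 := nonpos_of_forall_le_mul (show (0:ℝ) < -β from by linarith) hkey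
            rw [hginner] at h0
            have hle : (inner ℝ v (y - ybar) : ℝ) ≤ ρ - c := by nlinarith
            rw [hρ, hφyb, ← EReal.coe_sub]
            exact EReal.coe_le_coe_iff.2 hle
        · rintro ⟨x, y⟩ hyF
          simp only at hyF ⊢
          rw [show (inner ℝ (-v) (y - ybar) : ℝ) = -(inner ℝ v (y - ybar) : ℝ) from
            inner_neg_left _ _]
          have hkey : ∀ δ : ℝ, 0 < δ →
              -(g (y - ybar) + (inner ℝ u (x - xbar) : ℝ) * β) ≤ δ * (-β) := by
            intro δ hδ
            have hbB : ((y - ybar, (inner ℝ u (x - xbar) : ℝ) - δ) :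
                EuclideanSpace ℝ (Fin m) × ℝ) ∈ B := by
              refine ⟨x, by rw [sub_add_cancel]; exact hyF, ?_⟩
              show (inner ℝ u (x - xbar) : ℝ) - δ < (inner ℝ u (x - xbar) : ℝ)
              linarith
            have := hsep _ hA00 _ hbB
            rw [hsplit, hsplit] at this
            simp only [hg0] at this
            have hexp : ((inner ℝ u (x - xbar) : ℝ) - δ) * β
                = (inner ℝ u (x - xbar) : ℝ) * β - δ * β := by ring
            rw [hexp] at this
            linarith
          have h0 := nonpos_of_forall_le_mul (show (0:ℝ) < -β from by linarith) hkey
          rw [hginner] at h0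
          nlinarith
    · -- easy direction
      rintro ⟨v, hv, huv⟩ x
      rw [hc]
      rw [EReal.le_sub_iff_add_le (b := (c : EReal)) (c := optVal F φ x)
        (Or.inl (EReal.coe_ne_bot c)) (Or.inl (EReal.coe_ne_top c))]
      rw [optVal]
      refine le_iInf₂ fun y hy => ?_
      have h1 := huv (x, y) hy
      simp only at h1
      have hneg : (inner ℝ (-v) (y - ybar) : ℝ) = -(inner ℝ v (y - ybar) : ℝ) := inner_neg_left _ _
      rw [hneg] at h1
      have h2 : (inner ℝ u (x - xbar) : ℝ) ≤ (inner ℝ v (y - ybar) : ℝ) := by linarith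
      have h3 := hv y
      rw [hφyb] at h3
      rw [EReal.le_sub_iff_add_le (b := (c : EReal)) (c := φ y)
        (Or.inl (EReal.coe_ne_bot c)) (Or.inl (EReal.coe_ne_top c))] at h3
      calc ((inner ℝ u (x - xbar) : ℝ) : EReal) + (c : EReal)
          ≤ ((inner ℝ v (y - ybar) : ℝ) : EReal) + (c : EReal) := by
            exact add_le_add_left (EReal.coe_le_coe_iff.2 h2) _
        _ ≤ φ y := h3
end
end

section
/- Let f₁, …, f_m : ℝⁿ → ℝ be real-valued convex functions and φ : ℝᵐ → (-∞, ∞] convex and nondecreasing componentwise. Then the composite function g(x) = φ(f₁(x), …, f_m(x)) is convex. If in addition there exists (x₀, λ₁, …, λ_m) with λ_i > f_i(x₀) for all i and (λ₁, …, λ_m) ∈ ri(dom(φ)), then for any x̄ ∈ dom(g), ∂g(x̄) = { Σ_{i=1}^m γ_i v_i : (γ₁, …, γ_m) ∈ ∂φ(ȳ), v_i ∈ ∂f_i(x̄) } where ȳ = (f₁(x̄), …, f_m(x̄)). -/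
set_option maxHeartbeats 1000000

open Set

noncomputable section

/-- Every real-valued convex function on a finite-dimensional inner product space
has a subgradient at every point. -/
theorem exists_subgrad {E : Type*} [NormedAddCommGroup E] [InnerProductSpace ℝ E]
    [FiniteDimensional ℝ E] (h : E → ℝ) (hc : ConvexOn ℝ Set.univ h) (x₀ : E) :
    ∃ v : E, ∀ x, (inner ℝ v (x - x₀) : ℝ) ≤ h x - h x₀ := by
  have hcont : Continuous h := by
    exact continuousOn_univ.1 (hc.continuousOn isOpen_univ)
  set S : Set (E × ℝ) := {p : E × ℝ | h p.1 < p.2} with hS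
  have hSopen : IsOpen S := isOpen_lt (hcont.comp continuous_fst) continuous_snd
  have hSconv : Convex ℝ S := by
    rintro ⟨x, s⟩ hx ⟨y, t⟩ hy a b ha hb hab
    simp only [hS, mem_setOf_eq] at *
    have key : h (a • x + b • y) ≤ a * h x + b * h y := by
      simpa using hc.2 (mem_univ x) (mem_univ y) ha hb hab
    rcases ha.lt_or_eq with ha' | ha'
    · have : a * h x + b * h y < a * s + b * t :=
        add_lt_add_of_lt_of_le (by nlinarith) (mul_le_mul_of_nonneg_left hy.le hb)
      simpa using key.trans_lt this
    · have hb' : 0 < b := by linarith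
      have : a * h x + b * h y < a * s + b * t :=
        add_lt_add_of_le_of_lt (mul_le_mul_of_nonneg_left hx.le ha) (by nlinarith)
      simpa using key.trans_lt this
  have hdisj : Disjoint S {(x₀, h x₀)} := by
    rw [Set.disjoint_singleton_right]
    simp [hS]
  obtain ⟨ℓ, u, hlt, hge⟩ :=
    geometric_hahn_banach_open hSconv hSopen (convex_singleton _) hdisj
  have hu : u ≤ ℓ (x₀, h x₀) := hge _ rfl
  set β : ℝ := ℓ (0, 1) with hβ
  have hdec : ∀ x : E, ∀ t : ℝ, ℓ (x, t) = ℓ (x, 0) + t * β := by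
    intro x t
    have : (x, t) = (x, (0:ℝ)) + t • ((0:E), (1:ℝ)) := by
      simp [Prod.ext_iff]
    rw [this, map_add, map_smul]
    simp [hβ, smul_eq_mul]
  have hβneg : β < 0 := by
    have h1 : ℓ (x₀, h x₀ + 1) < u := hlt _ (by simp [hS])
    rw [hdec] at h1
    rw [hdec] at hu
    nlinarith
  have hkey : ∀ x : E, ℓ (x, 0) + h x * β ≤ u := by
    intro x
    by_contra hcon
    push_neg at hcon
    set ε : ℝ := (ℓ (x, 0) + h x * β - u) / (-β) with hε
    have hεpos : 0 < ε := div_pos (by linarith) (by linarith)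
    have := hlt (x, h x + ε) (by simp [hS, hεpos])
    rw [hdec] at this
    have hεβ : ε * (-β) = ℓ (x, 0) + h x * β - u := by
      rw [hε]; field_simp
      exact div_self (by linarith : β ≠ 0)
    nlinarith
  set a : E →L[ℝ] ℝ := ℓ.comp (ContinuousLinearMap.inl ℝ E ℝ) with ha
  have haapp : ∀ x : E, a x = ℓ (x, 0) := fun x => rfl
  set v' : E := (InnerProductSpace.toDual ℝ E).symm a with hv'
  have hv'app : ∀ x : E, (inner ℝ v' x : ℝ) = a x := fun x =>
    InnerProductSpace.toDual_symm_apply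
  refine ⟨(-β)⁻¹ • v', fun x => ?_⟩
  have h1 : ℓ (x, 0) + h x * β ≤ u := hkey x
  rw [hdec] at hu
  have h2 : ℓ (x, 0) - ℓ (x₀, 0) ≤ (-β) * (h x - h x₀) := by nlinarith
  rw [real_inner_smul_left, inner_sub_right, hv'app, hv'app, haapp, haapp]
  have hβ' : (0:ℝ) < -β := by linarith
  rw [inv_mul_le_iff₀ hβ']
  linarith [h2]

/-- Subdifferential sum rule for two real-valued convex functions. -/
theorem sum_rule_two {E : Type*} [NormedAddCommGroup E] [InnerProductSpace ℝ E]
    [FiniteDimensional ℝ E] (h₁ h₂ : E → ℝ) (hc₁ : ConvexOn ℝ Set.univ h₁)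
    (hc₂ : ConvexOn ℝ Set.univ h₂) (x₀ : E) (w : E)
    (hw : ∀ x, (inner ℝ w (x - x₀) : ℝ) ≤ (h₁ x + h₂ x) - (h₁ x₀ + h₂ x₀)) :
    ∃ w₁ w₂ : E, (∀ x, (inner ℝ w₁ (x - x₀) : ℝ) ≤ h₁ x - h₁ x₀) ∧
      (∀ x, (inner ℝ w₂ (x - x₀) : ℝ) ≤ h₂ x - h₂ x₀) ∧ w = w₁ + w₂ := by
  classical
  set r₀ : ℝ := h₁ x₀ + h₂ x₀ with hr₀
  set F : E → E → ℝ := fun z x => h₁ x + h₂ (x + z) - inner ℝ w (x - x₀) with hF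
  have lb : ∀ z x, 2 * r₀ - h₁ x₀ - h₂ (x₀ - z) ≤ F z x := by
    intro z x
    have e1 : h₁ ((1/2:ℝ) • x + (1/2:ℝ) • x₀) ≤ 1/2 * h₁ x + 1/2 * h₁ x₀ := by
      simpa using hc₁.2 (mem_univ x) (mem_univ x₀) (by norm_num) (by norm_num) (by norm_num)
    have e2 : h₂ ((1/2:ℝ) • (x + z) + (1/2:ℝ) • (x₀ - z)) ≤
        1/2 * h₂ (x + z) + 1/2 * h₂ (x₀ - z) := by
      simpa using hc₂.2 (mem_univ (x+z)) (mem_univ (x₀-z)) (by norm_num) (by norm_num) (by norm_num)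
    have emid : (1/2:ℝ) • (x + z) + (1/2:ℝ) • (x₀ - z) = (1/2:ℝ) • x + (1/2:ℝ) • x₀ := by
      module
    rw [emid] at e2
    have e3 := hw ((1/2:ℝ) • x + (1/2:ℝ) • x₀)
    have e4 : ((1/2:ℝ) • x + (1/2:ℝ) • x₀) - x₀ = (1/2:ℝ) • (x - x₀) := by module
    rw [e4, real_inner_smul_right] at e3
    simp only [hF]
    linarith
  have hbdd : ∀ z, BddBelow (range (F z)) := by
    intro z
    exact ⟨2 * r₀ - h₁ x₀ - h₂ (x₀ - z), by rintro r ⟨x, rfl⟩; exact lb z x⟩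
  have hne : ∀ z, (range (F z)).Nonempty := fun z => ⟨F z x₀, ⟨x₀, rfl⟩⟩
  set u : E → ℝ := fun z => sInf (range (F z)) with hu
  have hule : ∀ z x, u z ≤ F z x := fun z x => csInf_le (hbdd z) ⟨x, rfl⟩
  have key : ∀ (z₁ z₂ x₁ x₂ : E) (a b : ℝ), 0 ≤ a → 0 ≤ b → a + b = 1 →
      F (a • z₁ + b • z₂) (a • x₁ + b • x₂) ≤ a * F z₁ x₁ + b * F z₂ x₂ := by
    intro z₁ z₂ x₁ x₂ a b ha hb hab
    have e1 : h₁ (a • x₁ + b • x₂) ≤ a * h₁ x₁ + b * h₁ x₂ := by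
      simpa using hc₁.2 (mem_univ x₁) (mem_univ x₂) ha hb hab
    have emid : (a • x₁ + b • x₂) + (a • z₁ + b • z₂) = a • (x₁ + z₁) + b • (x₂ + z₂) := by
      module
    have e2 : h₂ ((a • x₁ + b • x₂) + (a • z₁ + b • z₂)) ≤ a * h₂ (x₁ + z₁) + b * h₂ (x₂ + z₂) := by
      rw [emid]
      simpa using hc₂.2 (mem_univ (x₁+z₁)) (mem_univ (x₂+z₂)) ha hb hab
    have e3 : (inner ℝ w ((a • x₁ + b • x₂) - x₀) : ℝ)
        = a * inner ℝ w (x₁ - x₀) + b * inner ℝ w (x₂ - x₀) := by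
      have : (a • x₁ + b • x₂) - x₀ = a • (x₁ - x₀) + b • (x₂ - x₀) := by
        calc (a • x₁ + b • x₂) - x₀ = (a • x₁ + b • x₂) - (a + b) • x₀ := by rw [hab, one_smul]
          _ = a • (x₁ - x₀) + b • (x₂ - x₀) := by module
      rw [this, inner_add_right, real_inner_smul_right, real_inner_smul_right]
    simp only [hF]
    rw [e3]
    linarith
  have uconv : ConvexOn ℝ Set.univ u := by
    refine ⟨convex_univ, fun z₁ _ z₂ _ a b ha hb hab => ?_⟩
    rcases ha.lt_or_eq with ha' | ha'
    · rcases hb.lt_or_eq with hb' | hb'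
      · have step1 : ∀ x₁, u (a • z₁ + b • z₂) ≤ a * F z₁ x₁ + b * u z₂ := by
          intro x₁
          have : (u (a • z₁ + b • z₂) - a * F z₁ x₁) / b ≤ sInf (range (F z₂)) := by
            refine le_csInf (hne z₂) ?_
            rintro r ⟨x₂, rfl⟩
            rw [div_le_iff₀ hb']
            have := (hule (a • z₁ + b • z₂) (a • x₁ + b • x₂)).trans
              (key z₁ z₂ x₁ x₂ a b ha hb hab)
            linarith
          rw [div_le_iff₀ hb'] at this
          simp only [hu] at *
          linarith
        have : (u (a • z₁ + b • z₂) - b * u z₂) / a ≤ sInf (range (F z₁)) := by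
          refine le_csInf (hne z₁) ?_
          rintro r ⟨x₁, rfl⟩
          rw [div_le_iff₀ ha']
          linarith [step1 x₁]
        rw [div_le_iff₀ ha'] at this
        simp only [hu, smul_eq_mul] at *
        linarith
      · have hb0 : b = 0 := hb'.symm
        have ha1 : a = 1 := by linarith
        subst hb0; subst ha1
        simp
    · have ha0 : a = 0 := ha'.symm
      have hb1 : b = 1 := by linarith
      subst ha0; subst hb1
      simp
  obtain ⟨s, hs⟩ := exists_subgrad u uconv 0
  have hs' : ∀ z, (inner ℝ s z : ℝ) ≤ u z - u 0 := by
    intro z; simpa using hs z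
  have hu0 : r₀ ≤ u 0 := by
    refine le_csInf (hne 0) ?_
    rintro r ⟨x, rfl⟩
    have := hw x
    simp only [hF, add_zero]
    linarith
  refine ⟨w - s, s, ?_, ?_, by abel⟩
  · intro x
    have h1 : u (x₀ - x) ≤ h₁ x + h₂ x₀ - inner ℝ w (x - x₀) := by
      have := hule (x₀ - x) x
      simp only [hF, add_sub_cancel] at this
      exact this
    have h2 := hs' (x₀ - x)
    have h3 : (inner ℝ s (x₀ - x) : ℝ) = - inner ℝ s (x - x₀) := by
      rw [← inner_neg_right]; congr 1; abel
    rw [inner_sub_left]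
    rw [h3] at h2
    linarith
  · intro x
    have h1 : u (x - x₀) ≤ h₁ x₀ + h₂ x := by
      have := hule (x - x₀) x₀
      simp only [hF, add_sub_cancel, sub_self, inner_zero_right] at this
      simpa using this
    have h2 := hs' (x - x₀)
    linarith

/-- Subdifferential sum rule for nonnegative combinations of finitely many
real-valued convex functions. -/
theorem sum_rule_fin {E : Type*} [NormedAddCommGroup E] [InnerProductSpace ℝ E]
    [FiniteDimensional ℝ E] {m : ℕ} (γ : Fin m → ℝ) (hγ : ∀ i, 0 ≤ γ i)
    (f : Fin m → E → ℝ) (hf : ∀ i, ConvexOn ℝ Set.univ (f i)) (x₀ : E) (w : E)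
    (hw : ∀ x, (inner ℝ w (x - x₀) : ℝ) ≤ (∑ i, γ i * f i x) - ∑ i, γ i * f i x₀) :
    ∃ v : Fin m → E, (∀ i, ∀ x, (inner ℝ (v i) (x - x₀) : ℝ) ≤ f i x - f i x₀) ∧
      w = ∑ i, γ i • v i := by
  classical
  have sumconv : ∀ s : Finset (Fin m), ConvexOn ℝ Set.univ (fun x => ∑ j ∈ s, γ j * f j x) := by
    intro s
    induction s using Finset.induction_on with
    | empty => simpa using convexOn_const (0:ℝ) convex_univ
    | insert _ _ hnotmem ih =>
      simp_rw [Finset.sum_insert hnotmem]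
      exact (((hf _).smul (hγ _)).add ih : )
  have claim : ∀ s : Finset (Fin m), ∀ w : E,
      (∀ x, (inner ℝ w (x - x₀) : ℝ) ≤ (∑ i ∈ s, γ i * f i x) - ∑ i ∈ s, γ i * f i x₀) →
      ∃ v : Fin m → E, (∀ i ∈ s, ∀ x, (inner ℝ (v i) (x - x₀) : ℝ) ≤ f i x - f i x₀) ∧
        w = ∑ i ∈ s, γ i • v i := by
    intro s
    induction s using Finset.induction_on with
    | empty =>
      intro w hw
      have hw0 : w = 0 := by
        have := hw (x₀ + w)
        simp at this
        exact this
      exact ⟨fun _ => 0, by simp, by simp [hw0]⟩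
    | insert i s hnotmem ih =>
      intro w hw
      simp_rw [Finset.sum_insert hnotmem] at hw
      obtain ⟨w₁, w₂, hw₁, hw₂, hsum⟩ := sum_rule_two (fun x => γ i * f i x)
        (fun x => ∑ j ∈ s, γ j * f j x) ((hf i).smul (hγ i) : ) (sumconv s) x₀ w (by
          intro x; simpa using hw x)
      obtain ⟨v, hv, hvsum⟩ := ih w₂ hw₂
      -- get vi with γ i • vi = w₁ and vi a subgradient of f i
      obtain ⟨vi, hvi, hvieq⟩ : ∃ vi : E,
          (∀ x, (inner ℝ vi (x - x₀) : ℝ) ≤ f i x - f i x₀) ∧ γ i • vi = w₁ := by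
        rcases (hγ i).lt_or_eq with hpos | hzero
        · refine ⟨(γ i)⁻¹ • w₁, fun x => ?_, by
            rw [smul_smul, mul_inv_cancel₀ (ne_of_gt hpos), one_smul]⟩
          rw [real_inner_smul_left]
          rw [inv_mul_le_iff₀ hpos]
          have := hw₁ x
          linarith
        · obtain ⟨vi, hvi⟩ := exists_subgrad (f i) (hf i) x₀
          refine ⟨vi, hvi, ?_⟩
          have hw₁0 : w₁ = 0 := by
            have h1 := hw₁ (x₀ + w₁)
            simp [← hzero] at h1
            exact h1
          rw [← hzero, hw₁0, zero_smul]
      refine ⟨Function.update v i vi, ?_, ?_⟩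
      · intro j hj x
        rcases Finset.mem_insert.mp hj with rfl | hj'
        · rw [Function.update_self]; exact hvi x
        · rw [Function.update_of_ne (by rintro rfl; exact hnotmem hj')]
          exact hv j hj' x
      · rw [Finset.sum_insert hnotmem, Function.update_self, hvieq]
        rw [hsum, hvsum]
        congr 1
        refine Finset.sum_congr rfl fun j hj => ?_
        rw [Function.update_of_ne (by rintro rfl; exact hnotmem hj)]
  obtain ⟨v, hv, hvsum⟩ := claim Finset.univ w (by simpa using hw)
  exact ⟨v, fun i x => hv i (Finset.mem_univ i) x, hvsum⟩

/-- Subdifferential of a composition with a nondecreasing convex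
extended-real-valued function of several variables. -/
theorem stmt_12 (n m : ℕ) (f : Fin m → EuclideanSpace ℝ (Fin n) → ℝ)
    (hf : ∀ i, ConvexOn ℝ univ (f i))
    (φ : EuclideanSpace ℝ (Fin m) → EReal) (hφbot : ∀ y, φ y ≠ ⊥)
    (hφconv : Convex ℝ {q : EuclideanSpace ℝ (Fin m) × ℝ | φ q.1 ≤ (q.2 : EReal)})
    (hφmono : ∀ y u : EuclideanSpace ℝ (Fin m), (∀ i, y i ≤ u i) → φ y ≤ φ u)
    (g : EuclideanSpace ℝ (Fin n) → EReal)
    (hg : ∀ x, g x = φ (WithLp.toLp 2 (fun i => f i x))) :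
    Convex ℝ {p : EuclideanSpace ℝ (Fin n) × ℝ | g p.1 ≤ (p.2 : EReal)} ∧
    ((∃ x₀ : EuclideanSpace ℝ (Fin n), ∃ lam : EuclideanSpace ℝ (Fin m),
        (∀ i, f i x₀ < lam i) ∧ lam ∈ intrinsicInterior ℝ {y | φ y < ⊤}) →
      ∀ xbar, g xbar < ⊤ →
        ∀ ybar : EuclideanSpace ℝ (Fin m), ybar = (fun i => f i xbar) →
          {w | ∀ x, ((inner ℝ w (x - xbar) : ℝ) : EReal) ≤ g x - g xbar} =
            {w | ∃ γ : EuclideanSpace ℝ (Fin m),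
              (∀ y, ((inner ℝ γ (y - ybar) : ℝ) : EReal) ≤ φ y - φ ybar) ∧
              ∃ v : Fin m → EuclideanSpace ℝ (Fin n),
                (∀ i, ∀ x, (inner ℝ (v i) (x - xbar) : ℝ) ≤ f i x - f i xbar) ∧
                w = ∑ i, γ i • v i}) := by
  classical
  constructor
  · -- convexity of the epigraph of g
    rintro ⟨x, sx⟩ hx ⟨x', sx'⟩ hx' a b ha hb hab
    simp only [mem_setOf_eq, hg] at hx hx' ⊢
    have hmem := hφconv (mem_setOf_eq ▸ hx : ((WithLp.toLp 2 (fun i => f i x) : EuclideanSpace ℝ (Fin m)), sx)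
        ∈ {q : EuclideanSpace ℝ (Fin m) × ℝ | φ q.1 ≤ (q.2 : EReal)})
      (mem_setOf_eq ▸ hx' : ((WithLp.toLp 2 (fun i => f i x') : EuclideanSpace ℝ (Fin m)), sx')
        ∈ {q : EuclideanSpace ℝ (Fin m) × ℝ | φ q.1 ≤ (q.2 : EReal)}) ha hb hab
    simp only [mem_setOf_eq, Prod.smul_mk, Prod.mk_add_mk, smul_eq_mul] at hmem
    refine le_trans (hφmono _ _ ?_) hmem
    intro i
    simp only [PiLp.add_apply, PiLp.smul_apply, smul_eq_mul]
    exact (by simpa using (hf i).2 (mem_univ x) (mem_univ x') ha hb hab : _)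
  · rintro ⟨x₀, lam, hlt₀, hlam⟩ xbar hxbar ybar hybar
    have hgybar : g xbar = φ ybar := by rw [hg, ← hybar, WithLp.toLp_ofLp]
    have hfin : φ ybar ≠ ⊤ := by rw [← hgybar]; exact hxbar.ne
    set rbar : ℝ := (φ ybar).toReal with hrbar_def
    have hrbar : (rbar : EReal) = φ ybar := EReal.coe_toReal hfin (hφbot ybar)
    ext w
    simp only [mem_setOf_eq]
    constructor
    · -- hard direction
      intro hw
      -- real form of the subgradient hypothesis
      have hwr : ∀ (x : EuclideanSpace ℝ (Fin n)) (a : ℝ),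
          φ (WithLp.toLp 2 (fun i => f i x)) ≤ (a : EReal) → (inner ℝ w (x - xbar) : ℝ) ≤ a - rbar := by
        intro x a hax
        have hx := hw x
        rw [hg x, hgybar, ← hrbar] at hx
        have hnt : φ (WithLp.toLp 2 (fun i => f i x)) ≠ ⊤ := ne_top_of_le_ne_top (EReal.coe_ne_top a) hax
        have hc : ((φ (WithLp.toLp 2 (fun i => f i x))).toReal : EReal) = φ (WithLp.toLp 2 (fun i => f i x)) :=
          EReal.coe_toReal hnt (hφbot _)
        rw [← hc, ← EReal.coe_sub] at hx
        have h1 : (inner ℝ w (x - xbar) : ℝ) ≤ (φ (WithLp.toLp 2 (fun i => f i x))).toReal - rbar :=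
          EReal.coe_le_coe_iff.mp hx
        have h2 : (φ (WithLp.toLp 2 (fun i => f i x))).toReal ≤ a := by
          rw [← EReal.coe_le_coe_iff, hc]; exact hax
        linarith
      -- inner ℝ product of a convex combination
      have icomb : ∀ (u x x' : EuclideanSpace ℝ (Fin n)) (c d : ℝ), c + d = 1 →
          (inner ℝ u ((c • x + d • x') - xbar) : ℝ)
            = c * inner ℝ u (x - xbar) + d * inner ℝ u (x' - xbar) := by
        intro u x x' c d hcd
        have : (c • x + d • x') - xbar = c • (x - xbar) + d • (x' - xbar) := by
          calc (c • x + d • x') - xbar = (c • x + d • x') - (c + d) • xbar := by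
                rw [hcd, one_smul]
            _ = c • (x - xbar) + d • (x' - xbar) := by module
        rw [this, inner_add_right, real_inner_smul_right, real_inner_smul_right]
      -- the auxiliary convex set
      set E : Set (EuclideanSpace ℝ (Fin m) × ℝ) :=
        {p | ∃ x : EuclideanSpace ℝ (Fin n), ∃ y : EuclideanSpace ℝ (Fin m), ∃ a : ℝ,
          (∀ i, f i x ≤ y i + p.1 i) ∧ φ y ≤ (a : EReal) ∧
          a - (inner ℝ w (x - xbar) : ℝ) < p.2} with hE
      have hEconv : Convex ℝ E := by
        rintro ⟨z, t⟩ ⟨x, y, a, hfeas, hφa, hta⟩ ⟨z', t'⟩ ⟨x', y', a', hfeas', hφa', hta'⟩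
          c d hc hd hcd
        refine ⟨c • x + d • x', c • y + d • y', c * a + d * a', ?_, ?_, ?_⟩
        · intro i
          have h1 : f i (c • x + d • x') ≤ c * f i x + d * f i x' := by
            simpa using (hf i).2 (mem_univ x) (mem_univ x') hc hd hcd
          have h2 : c * f i x + d * f i x' ≤ c * (y i + z i) + d * (y' i + z' i) :=
            add_le_add (mul_le_mul_of_nonneg_left (hfeas i) hc)
              (mul_le_mul_of_nonneg_left (hfeas' i) hd)
          simp only [Prod.smul_mk, Prod.mk_add_mk, PiLp.add_apply, PiLp.smul_apply, smul_eq_mul]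
          linarith
        · have hmem := hφconv (mem_setOf_eq ▸ hφa : ((y : EuclideanSpace ℝ (Fin m)), a)
              ∈ {q : EuclideanSpace ℝ (Fin m) × ℝ | φ q.1 ≤ (q.2 : EReal)})
            (mem_setOf_eq ▸ hφa' : ((y' : EuclideanSpace ℝ (Fin m)), a')
              ∈ {q : EuclideanSpace ℝ (Fin m) × ℝ | φ q.1 ≤ (q.2 : EReal)}) hc hd hcd
          simpa only [mem_setOf_eq, Prod.smul_mk, Prod.mk_add_mk, smul_eq_mul] using hmem
        · simp only [Prod.smul_mk, Prod.mk_add_mk, smul_eq_mul]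
          rw [icomb w x x' c d hcd]
          rcases hc.lt_or_eq with hc' | hc'
          · have : c * (a - (inner ℝ w (x - xbar) : ℝ)) + d * (a' - (inner ℝ w (x' - xbar) : ℝ))
                < c * t + d * t' :=
              add_lt_add_of_lt_of_le (by nlinarith)
                (mul_le_mul_of_nonneg_left hta'.le hd)
            linarith
          · have hd' : 0 < d := by linarith
            have : c * (a - (inner ℝ w (x - xbar) : ℝ)) + d * (a' - (inner ℝ w (x' - xbar) : ℝ))
                < c * t + d * t' :=
              add_lt_add_of_le_of_lt (mul_le_mul_of_nonneg_left hta.le hc) (by nlinarith)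
            linarith
      -- the point (0, rbar) is not in E
      have hpnot : ((0 : EuclideanSpace ℝ (Fin m)), rbar) ∉ E := by
        rintro ⟨x, y, a, hfeas, hφa, hta⟩
        have h1 : φ (WithLp.toLp 2 (fun i => f i x)) ≤ φ y := by
          refine hφmono _ _ fun i => ?_
          have := hfeas i
          simpa using this
        have := hwr x a (h1.trans hφa)
        simp only at hta
        linarith
      -- interior of E is nonempty
      have hlamd : φ lam < ⊤ := by
        have h := intrinsicInterior_subset (𝕜 := ℝ) (s := {y | φ y < ⊤}) hlam
        exact h
      set alam : ℝ := (φ lam).toReal with halam_def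
      have halam : (alam : EReal) = φ lam := EReal.coe_toReal hlamd.ne (hφbot lam)
      set c₀ : ℝ := alam - (inner ℝ w (x₀ - xbar) : ℝ) with hc₀
      set O : Set (EuclideanSpace ℝ (Fin m)) := {z | ∀ i, f i x₀ < lam i + z i} with hO
      have hOopen : IsOpen O := by
        have : O = ⋂ i, {z : EuclideanSpace ℝ (Fin m) | f i x₀ < lam i + z i} := by
          ext z; simp [hO]
        rw [this]
        exact isOpen_iInter_of_finite fun i =>
          isOpen_lt continuous_const (continuous_const.add (PiLp.continuous_apply 2 _ i))
      have hsub : O ×ˢ Ioi c₀ ⊆ E := by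
        rintro ⟨z, t⟩ ⟨hz, ht⟩
        exact ⟨x₀, lam, alam, fun i => (hz i).le, halam ▸ le_refl _, ht⟩
      have hsubint : O ×ˢ Ioi c₀ ⊆ interior E :=
        interior_maximal hsub (hOopen.prod isOpen_Ioi)
      have h0O : (0 : EuclideanSpace ℝ (Fin m)) ∈ O := by
        intro i; simpa using hlt₀ i
      -- separate
      obtain ⟨ℓ, u, hltu, hgeu⟩ := geometric_hahn_banach_open hEconv.interior isOpen_interior
        (convex_singleton ((0 : EuclideanSpace ℝ (Fin m)), rbar))
        (disjoint_singleton_right.mpr fun hmem => hpnot (interior_subset hmem))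
      have hu : u ≤ ℓ (0, rbar) := hgeu _ rfl
      set β : ℝ := ℓ (0, 1) with hβ
      have hdec : ∀ (z : EuclideanSpace ℝ (Fin m)) (t : ℝ), ℓ (z, t) = ℓ (z, 0) + t * β := by
        intro z t
        have : ((z, t) : EuclideanSpace ℝ (Fin m) × ℝ)
            = (z, (0:ℝ)) + t • ((0 : EuclideanSpace ℝ (Fin m)), (1:ℝ)) := by
          simp [Prod.ext_iff]
        rw [this, map_add, map_smul]
        simp [hβ, smul_eq_mul]
      have hℓp : ℓ (0, rbar) = ℓ (0, 0) + rbar * β := hdec 0 rbar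
      have hℓ00 : ℓ ((0 : EuclideanSpace ℝ (Fin m)), (0:ℝ)) = 0 := by
        rw [Prod.mk_zero_zero]; exact map_zero ℓ
      have hβneg : β < 0 := by
        set T : ℝ := max (c₀ + 1) (rbar + 1) with hT
        have hTmem : ((0 : EuclideanSpace ℝ (Fin m)), T) ∈ interior E :=
          hsubint ⟨h0O, (show c₀ < T from lt_of_lt_of_le (by linarith : c₀ < c₀ + 1) (le_max_left _ _))⟩
        have h1 := hltu _ hTmem
        rw [hdec, hℓ00] at h1
        rw [hℓp, hℓ00] at hu
        have hTr : rbar + 1 ≤ T := le_max_right _ _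
        nlinarith
      -- linear bound on all of E
      have hEle : ∀ q ∈ E, ℓ q ≤ u := by
        intro q hq
        by_contra hcon
        push_neg at hcon
        set q₀ : EuclideanSpace ℝ (Fin m) × ℝ := (0, c₀ + 1) with hq₀def
        have hq₀ : q₀ ∈ interior E := hsubint ⟨h0O, by simp [hq₀def]⟩
        set D : ℝ := ℓ q₀ - ℓ q with hD
        set ε : ℝ := ℓ q - u with hε
        have hεpos : 0 < ε := by simp only [hε]; linarith
        set θ : ℝ := min 1 (ε / (|D| + 1)) with hθ
        have hθ0 : 0 < θ := lt_min one_pos (div_pos hεpos (by positivity))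
        have hθ1 : θ ≤ 1 := min_le_left _ _
        have hmem := hEconv.combo_interior_self_mem_interior hq₀ hq hθ0
          (by linarith : (0:ℝ) ≤ 1 - θ) (by ring)
        have hlt2 := hltu _ hmem
        rw [map_add, map_smul, map_smul] at hlt2
        simp only [smul_eq_mul] at hlt2
        have hθD : θ * |D| < ε := by
          have h1 : θ ≤ ε / (|D| + 1) := min_le_right _ _
          have h2 : θ * |D| ≤ ε / (|D| + 1) * |D| :=
            mul_le_mul_of_nonneg_right h1 (abs_nonneg D)
          have h3 : ε / (|D| + 1) * |D| < ε := by
            rw [div_mul_eq_mul_div, div_lt_iff₀ (by positivity)]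
            nlinarith [abs_nonneg D]
          linarith
        have hdist : θ * D = θ * ℓ q₀ - θ * ℓ q := by rw [hD]; ring
        have hexp : (1 - θ) * ℓ q = ℓ q - θ * ℓ q := by ring
        have hmd : -(θ * |D|) ≤ θ * D := by
          have := mul_le_mul_of_nonneg_left (neg_abs_le D) hθ0.le
          linarith
        have hεq : ε = ℓ q - u := rfl
        linarith
      -- dual vector
      obtain ⟨γ', hγ'app⟩ : ∃ γ' : EuclideanSpace ℝ (Fin m),
          ∀ z : EuclideanSpace ℝ (Fin m), (inner ℝ γ' z : ℝ) = ℓ (z, 0) :=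
        ⟨(InnerProductSpace.toDual ℝ (EuclideanSpace ℝ (Fin m))).symm
          (ℓ.comp (ContinuousLinearMap.inl ℝ (EuclideanSpace ℝ (Fin m)) ℝ)),
          fun z => InnerProductSpace.toDual_symm_apply⟩
      obtain ⟨gam, hgamdef⟩ : ∃ gam : EuclideanSpace ℝ (Fin m),
          ∀ z : EuclideanSpace ℝ (Fin m), (inner ℝ gam z : ℝ) = β⁻¹ * ℓ (z, 0) :=
        ⟨β⁻¹ • γ', fun z => by rw [real_inner_smul_left, hγ'app]⟩
      have hgamapp : ∀ z : EuclideanSpace ℝ (Fin m), ℓ (z, 0) = β * (inner ℝ gam z : ℝ) := by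
        intro z
        rw [hgamdef, ← mul_assoc, mul_inv_cancel₀ hβneg.ne, one_mul]
      -- master inequality
      have hM : ∀ (x : EuclideanSpace ℝ (Fin n)) (y : EuclideanSpace ℝ (Fin m)) (a : ℝ),
          φ y ≤ (a : EReal) →
          rbar ≤ (inner ℝ gam (WithLp.toLp 2 (fun i => f i x - y i) : EuclideanSpace ℝ (Fin m)) : ℝ)
            + (a - (inner ℝ w (x - xbar) : ℝ)) := by
        intro x y a hya
        set z : EuclideanSpace ℝ (Fin m) := WithLp.toLp 2 (fun i => f i x - y i) with hz
        set s : ℝ := a - (inner ℝ w (x - xbar) : ℝ) with hs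
        have hbound : ∀ ε : ℝ, 0 < ε → ℓ (z, s + ε) ≤ u := by
          intro ε hε
          refine hEle _ ⟨x, y, a, fun i => ?_, hya, by simp only [hs]; linarith⟩
          simp only [hz]
          exact le_of_eq (by ring)
        have hA : ℓ (z, 0) + s * β ≤ u := by
          by_contra hcon
          push_neg at hcon
          set A : ℝ := ℓ (z, 0) + s * β with hA
          have hε : 0 < (A - u) / (-β) / 2 :=
            div_pos (div_pos (by linarith) (by linarith)) two_pos
          have := hbound _ hε
          rw [hdec] at this
          have hβdiv : β / (-β) = -1 := by rw [div_neg, div_self hβneg.ne]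
          have hcomp : ((A - u) / (-β) / 2) * β = -((A - u) / 2) := by
            calc ((A - u) / (-β) / 2) * β = (A - u) * (β / (-β)) / 2 := by ring
              _ = -((A - u) / 2) := by rw [hβdiv]; ring
          nlinarith
        rw [hℓp, hℓ00] at hu
        have h2 : ℓ (z, 0) + s * β ≤ rbar * β := le_trans hA (by linarith)
        rw [hgamapp] at h2
        have hβ' : (0:ℝ) < -β := by linarith
        nlinarith
      -- gam is a subgradient of φ at ybar (real form)
      have hγreal : ∀ (y : EuclideanSpace ℝ (Fin m)) (a : ℝ), φ y ≤ (a : EReal) →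
          (inner ℝ gam (y - ybar) : ℝ) ≤ a - rbar := by
        intro y a hya
        have h1 := hM xbar y a hya
        have hzy : (WithLp.toLp 2 (fun i => f i xbar - y i) : EuclideanSpace ℝ (Fin m)) = ybar - y := by
          ext i
          simp [hybar, PiLp.sub_apply]
        rw [hzy, sub_self, inner_zero_right] at h1
        have h2 : (inner ℝ gam (ybar - y) : ℝ) = -(inner ℝ gam (y - ybar) : ℝ) := by
          rw [← inner_neg_right]
          congr 1
          abel
        rw [h2] at h1
        linarith
      -- gam is componentwise nonnegative
      have hgampos : ∀ i, 0 ≤ gam i := by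
        intro i
        set y : EuclideanSpace ℝ (Fin m) := ybar - EuclideanSpace.single i 1 with hy
        have hyb : φ y ≤ (rbar : EReal) := by
          rw [hrbar]
          refine hφmono _ _ fun j => ?_
          simp only [hy, PiLp.sub_apply, EuclideanSpace.single_apply]
          have : (0:ℝ) ≤ if j = i then 1 else 0 := by split_ifs <;> norm_num
          linarith
        have h1 := hγreal y rbar hyb
        have hyy : y - ybar = -EuclideanSpace.single i (1:ℝ) := by
          simp only [hy]; abel
        rw [hyy, inner_neg_right, EuclideanSpace.inner_single_right] at h1
        simp only [map_one, one_mul, conj_trivial] at h1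
        linarith
      -- w is a subgradient of ∑ gam i * f i at xbar
      have hwsum : ∀ x, (inner ℝ w (x - xbar) : ℝ)
          ≤ (∑ i, gam i * f i x) - ∑ i, gam i * f i xbar := by
        intro x
        have h1 := hM x ybar rbar (le_of_eq hrbar.symm)
        have h2 : (inner ℝ gam (WithLp.toLp 2 (fun i => f i x - ybar i) : EuclideanSpace ℝ (Fin m)) : ℝ)
            = (∑ i, gam i * f i x) - ∑ i, gam i * f i xbar := by
          rw [PiLp.inner_apply]
          simp only [RCLike.inner_apply, conj_trivial, hybar]
          rw [← Finset.sum_sub_distrib]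
          congr 1
          funext i
          ring
        rw [h2] at h1
        linarith
      obtain ⟨v, hv, hveq⟩ := sum_rule_fin (fun i => gam i) hgampos f hf xbar w hwsum
      refine ⟨gam, ?_, v, hv, hveq⟩
      intro y
      by_cases htop : φ y = ⊤
      · rw [htop, ← hrbar, EReal.top_sub_coe]
        exact le_top
      · have hcy : ((φ y).toReal : EReal) = φ y := EReal.coe_toReal htop (hφbot y)
        have := hγreal y (φ y).toReal (le_of_eq hcy.symm)
        rw [← hcy, ← hrbar, ← EReal.coe_sub]
        exact_mod_cast this
    · -- easy direction
      rintro ⟨γ, hγsub, v, hv, hweq⟩ x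
      -- γ is componentwise nonnegative
      have hγpos : ∀ i, 0 ≤ γ i := by
        intro i
        set y : EuclideanSpace ℝ (Fin m) := ybar - EuclideanSpace.single i 1 with hy
        have hyb : φ y ≤ φ ybar := by
          refine hφmono _ _ fun j => ?_
          simp only [hy, PiLp.sub_apply, EuclideanSpace.single_apply]
          have : (0:ℝ) ≤ if j = i then 1 else 0 := by split_ifs <;> norm_num
          linarith
        have h1 := hγsub y
        have hle : φ y - φ ybar ≤ 0 := by
          calc φ y - φ ybar ≤ φ ybar - φ ybar := EReal.sub_le_sub hyb (le_refl _)
            _ = 0 := by rw [← hrbar, ← EReal.coe_sub, sub_self, EReal.coe_zero]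
        have h2 : ((inner ℝ γ (y - ybar) : ℝ) : EReal) ≤ ((0:ℝ) : EReal) := by
          rw [EReal.coe_zero]; exact h1.trans hle
        have h3 : (inner ℝ γ (y - ybar) : ℝ) ≤ 0 := EReal.coe_le_coe_iff.mp h2
        have hyy : y - ybar = -EuclideanSpace.single i (1:ℝ) := by
          simp only [hy]; abel
        rw [hyy, inner_neg_right, EuclideanSpace.inner_single_right] at h3
        simp only [map_one, one_mul, conj_trivial] at h3
        linarith
      set Fx : EuclideanSpace ℝ (Fin m) := WithLp.toLp 2 (fun i => f i x) with hFx
      have hreal : (inner ℝ w (x - xbar) : ℝ)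
          ≤ (inner ℝ γ (Fx - ybar) : ℝ) := by
        rw [hweq, sum_inner]
        have hineq : ∀ i, (inner ℝ (γ i • v i) (x - xbar) : ℝ) ≤ γ i * (f i x - f i xbar) := by
          intro i
          rw [real_inner_smul_left]
          exact mul_le_mul_of_nonneg_left (hv i x) (hγpos i)
        calc (∑ i, (inner ℝ (γ i • v i) (x - xbar) : ℝ)) ≤ ∑ i, γ i * (f i x - f i xbar) :=
              Finset.sum_le_sum fun i _ => hineq i
          _ = (inner ℝ γ (Fx - ybar) : ℝ) := by
              rw [PiLp.inner_apply]
              simp only [RCLike.inner_apply, conj_trivial, PiLp.sub_apply, hybar, hFx]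
              exact Finset.sum_congr rfl fun i _ => mul_comm _ _
      have h2 := hγsub Fx
      rw [hg x, hg xbar, ← hybar]
      calc ((inner ℝ w (x - xbar) : ℝ) : EReal)
          ≤ ((inner ℝ γ (Fx - ybar) : ℝ) : EReal) := EReal.coe_le_coe_iff.mpr hreal
        _ ≤ φ Fx - φ ybar := h2
        _ = φ (WithLp.toLp 2 (fun i => f i x)) - φ ybar := by rw [hFx]
end
end
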